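/- arXiv:math-ph/0406041 — 7 statements merged into one kernel-verified Lean document; each statement's English description precedes it below -/
import Mathlib

section
/- Suppose in addition e is continuous and there exist ν > 0, e₊ ∈ ℝ, C > 0 with |e(x) − e₊| ≤ C⟨x⟩^{-(2+ν)} for all x ≥ 0, and m₀ ≤ E − e₊ ≤ M₀ for all E ∈ Δ; set k₊(E) := √(2(E − e₊)). Then for every E ∈ Δ the improper integral ω(E) := ∫₀^∞ (k(y,E) − k₊(E)) dy converges, and the remainder r(x,E) := ∫₀ˣ k(y,E) dy − x·k₊(E) − ω(E) satisfies: for every natural number n there is C′(n) with |∂ⁿ/∂Eⁿ r(x,E)| ≤ C′(n) ⟨x⟩^{-(1+ν)} for all x ≥ 0, uniformly in E ∈ Δ. -/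
/-!
Write `k = √(2(E - e))`, `k₊ = √(2(E - e₊))`. For `E` within `m₀/2` of `Δ` the `n`-th
`E`-derivative of `k₊ - k(y, ·)` is `c_n ((2(E - e₊))^{1/2-n} - (2(E - e(y)))^{1/2-n})`, and by
the mean value theorem it is `O(|e(y) - e₊|) = O(⟨y⟩^{-(2+ν)})` uniformly in `E`. These
integrable dominations give `ω`, the identity `r(x, E) = ∫ₓ^∞ (k₊ - k(y, E)) dy`, and the right
to differentiate it under the integral sign `n` times; the tail estimate
`∫ₓ^∞ ⟨y⟩^{-s} dy ≲ ⟨x⟩^{1-s}` (from `⟨y⟩ ≥ (1 + y)/√2`) finishes the proof.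
-/

open MeasureTheory Set Filter Topology

noncomputable def sqrtDerivCoeff : ℕ → ℝ
  | 0 => 1
  | n + 1 => (1 - 2 * n) * sqrtDerivCoeff n

-- `sqrtTwoMulDeriv n` is the `n`-th derivative of `t ↦ √(2t)` on `0 < t`.
noncomputable def sqrtTwoMulDeriv (n : ℕ) (t : ℝ) : ℝ :=
  sqrtDerivCoeff n * (2 * t) ^ ((1 / 2 : ℝ) - n)

lemma sqrtTwoMulDeriv_zero (t : ℝ) : sqrtTwoMulDeriv 0 t = √(2 * t) := by
  simp [sqrtTwoMulDeriv, sqrtDerivCoeff, Real.sqrt_eq_rpow]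

lemma hasDerivAt_sqrtTwoMulDeriv (n : ℕ) {t : ℝ} (ht : 0 < t) :
    HasDerivAt (sqrtTwoMulDeriv n) (sqrtTwoMulDeriv (n + 1) t) t := by
  have h := (((hasDerivAt_id t).const_mul 2).rpow_const (p := 1 / 2 - n)
    (Or.inl (by simp [ht.ne']))).const_mul (sqrtDerivCoeff n)
  refine h.congr_deriv ?_
  simp only [sqrtTwoMulDeriv, sqrtDerivCoeff, Nat.cast_succ, sub_add_eq_sub_sub, id]
  ring

lemma measurable_sqrtTwoMulDeriv (n : ℕ) : Measurable (sqrtTwoMulDeriv n) := by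
  unfold sqrtTwoMulDeriv
  fun_prop

lemma hasDerivAt_sqrtTwoMulDeriv_sub (n : ℕ) {a E : ℝ} (h : 0 < E - a) :
    HasDerivAt (fun E' => sqrtTwoMulDeriv n (E' - a)) (sqrtTwoMulDeriv (n + 1) (E - a)) E :=
  (hasDerivAt_sqrtTwoMulDeriv n h).comp_sub_const E a

lemma abs_sqrtTwoMulDeriv_succ_le (n : ℕ) {m t : ℝ} (hm : 0 < m) (hmt : m ≤ t) :
    |sqrtTwoMulDeriv (n + 1) t| ≤ |sqrtTwoMulDeriv (n + 1) m| := by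
  simp only [sqrtTwoMulDeriv, abs_mul]
  rw [abs_of_pos (Real.rpow_pos_of_pos (by linarith : (0:ℝ) < 2 * t) _),
    abs_of_pos (Real.rpow_pos_of_pos (by linarith : (0:ℝ) < 2 * m) _)]
  refine mul_le_mul_of_nonneg_left ?_ (abs_nonneg _)
  exact Real.rpow_le_rpow_of_nonpos (by positivity) (by linarith) (by push_cast; linarith)

lemma abs_sqrtTwoMulDeriv_sub_le (n : ℕ) {m s t : ℝ} (hm : 0 < m) (hs : m ≤ s) (ht : m ≤ t) :
    |sqrtTwoMulDeriv n s - sqrtTwoMulDeriv n t| ≤ |sqrtTwoMulDeriv (n + 1) m| * |s - t| := by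
  have hderiv : ∀ u ∈ Ici m,
      HasDerivWithinAt (sqrtTwoMulDeriv n) (sqrtTwoMulDeriv (n + 1) u) (Ici m) u := fun u hu =>
    (hasDerivAt_sqrtTwoMulDeriv n (hm.trans_le hu)).hasDerivWithinAt
  simpa only [Real.norm_eq_abs] using (convex_Ici m).norm_image_sub_le_of_norm_hasDerivWithin_le
    hderiv (fun u hu => abs_sqrtTwoMulDeriv_succ_le n hm hu) ht hs

section ParametricIntegral

variable {𝕜 α E : Type*} [RCLike 𝕜] [MeasurableSpace α] {μ : Measure α}
  [NormedAddCommGroup E] [NormedSpace ℝ E] [NormedSpace 𝕜 E]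
  {F : ℕ → 𝕜 → α → E} {bound : ℕ → α → ℝ} {U : Set 𝕜}

lemma iteratedDeriv_eq_integral_of_forall_dominated {f : 𝕜 → E} (hU : IsOpen U)
    (hf : ∀ t ∈ U, f t = ∫ a, F 0 t a ∂μ)
    (hF_meas : ∀ n, ∀ t ∈ U, AEStronglyMeasurable (F n t) μ)
    (bound_integrable : ∀ n, Integrable (bound n) μ)
    (h_bound : ∀ n, ∀ᵐ a ∂μ, ∀ t ∈ U, ‖F n t a‖ ≤ bound n a)
    (h_diff : ∀ n, ∀ᵐ a ∂μ, ∀ t ∈ U, HasDerivAt (F n · a) (F (n + 1) t a) t) (n : ℕ) :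
    ∀ t ∈ U, iteratedDeriv n f t = ∫ a, F n t a ∂μ := by
  have hasDerivAt_integral : ∀ k, ∀ t ∈ U,
      HasDerivAt (fun s => ∫ a, F k s a ∂μ) (∫ a, F (k + 1) t a ∂μ) t := by
    intro k t ht
    have hint : Integrable (F k t) μ := (bound_integrable k).mono' (hF_meas k t ht) <| by
      filter_upwards [h_bound k] with a ha using ha t ht
    exact (hasDerivAt_integral_of_dominated_loc_of_deriv_le (hU.mem_nhds ht)
      (eventually_of_mem (hU.mem_nhds ht) (hF_meas k)) hint (hF_meas (k + 1) t ht)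
      (h_bound (k + 1)) (bound_integrable (k + 1)) (h_diff k)).2
  induction n with
  | zero => simpa using hf
  | succ n ih =>
    intro t ht
    have heq : iteratedDeriv n f =ᶠ[𝓝 t] fun s => ∫ a, F n s a ∂μ :=
      eventually_of_mem (hU.mem_nhds ht) ih
    rw [iteratedDeriv_succ, heq.deriv_eq]
    exact (hasDerivAt_integral n t ht).deriv

end ParametricIntegral

lemma integrable_sqrt_one_add_sq_rpow_neg {s : ℝ} (hs : 1 < s) :
    Integrable (fun y : ℝ => √(1 + y ^ 2) ^ (-s)) := by
  convert integrable_rpow_neg_one_add_norm_sq (E := ℝ) (μ := volume) (r := s) (by simpa using hs)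
    using 2 with y
  rw [Real.sqrt_eq_rpow, ← Real.rpow_mul (by positivity), Real.norm_eq_abs, sq_abs]
  ring_nf

lemma sqrt_one_add_sq_rpow_neg_le {s y : ℝ} (hs : 0 ≤ s) (hy : 0 ≤ y) :
    √(1 + y ^ 2) ^ (-s) ≤ √2 ^ s * (1 + y) ^ (-s) := by
  have hle : 1 + y ≤ √2 * √(1 + y ^ 2) := by
    rw [← Real.sqrt_mul zero_le_two]
    exact Real.le_sqrt_of_sq_le (by nlinarith [sq_nonneg (1 - y)])
  calc √(1 + y ^ 2) ^ (-s) = √2 ^ s * (√2 * √(1 + y ^ 2)) ^ (-s) := by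
        rw [Real.mul_rpow (by positivity) (by positivity), ← mul_assoc,
          Real.rpow_neg (Real.sqrt_nonneg 2) s,
          mul_inv_cancel₀ (by positivity), one_mul]
    _ ≤ √2 ^ s * (1 + y) ^ (-s) := by
        refine mul_le_mul_of_nonneg_left ?_ (by positivity)
        exact Real.rpow_le_rpow_of_nonpos (by positivity) hle (by linarith)

lemma setIntegral_Ici_sqrt_one_add_sq_rpow_neg_le {s x : ℝ} (hs : 1 < s) (hx : 0 ≤ x) :
    ∫ y in Ici x, √(1 + y ^ 2) ^ (-s) ≤ √2 ^ s / (s - 1) * √(1 + x ^ 2) ^ (1 - s) := by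
  set G : ℝ → ℝ := fun y => -(1 + y) ^ (1 - s) / (s - 1)
  have hG : ∀ y ∈ Ici x, HasDerivAt G ((1 + y) ^ (-s)) y := by
    intro y hy
    have hy : (0:ℝ) < 1 + y := by linarith [mem_Ici.mp hy]
    refine ((((hasDerivAt_id y).const_add 1).rpow_const (p := 1 - s)
      (Or.inl hy.ne')).neg.div_const (s - 1)).congr_deriv ?_
    have hs' : s - 1 ≠ 0 := by linarith
    simp only [id]
    rw [show 1 - s - 1 = -s by ring]
    field_simp
    ring
  have hG_lim : Tendsto G atTop (𝓝 0) := by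
    have h := (tendsto_rpow_neg_atTop (by linarith : 0 < s - 1)).comp
      (tendsto_atTop_add_const_left atTop 1 tendsto_id)
    simpa [G, neg_sub] using (h.neg.div_const (s - 1))
  have hG_nonneg : ∀ y ∈ Ioi x, 0 ≤ (1 + y) ^ (-s) :=
    fun y hy => Real.rpow_nonneg (by linarith [mem_Ioi.mp hy]) _
  calc ∫ y in Ici x, √(1 + y ^ 2) ^ (-s)
      = ∫ y in Ioi x, √(1 + y ^ 2) ^ (-s) := integral_Ici_eq_integral_Ioi
    _ ≤ ∫ y in Ioi x, √2 ^ s * (1 + y) ^ (-s) := by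
        refine setIntegral_mono_on (integrable_sqrt_one_add_sq_rpow_neg hs).integrableOn
          ((integrableOn_Ioi_deriv_of_nonneg' hG hG_nonneg hG_lim).const_mul _) measurableSet_Ioi
          fun y hy => sqrt_one_add_sq_rpow_neg_le (by linarith) (hx.trans (mem_Ioi.mp hy).le)
    _ = √2 ^ s / (s - 1) * (1 + x) ^ (1 - s) := by
        rw [integral_const_mul, integral_Ioi_of_hasDerivAt_of_nonneg' hG hG_nonneg hG_lim]
        simp only [G]
        ring
    _ ≤ √2 ^ s / (s - 1) * √(1 + x ^ 2) ^ (1 - s) := by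
        have hle : √(1 + x ^ 2) ≤ 1 + x :=
          Real.sqrt_le_iff.mpr ⟨by linarith, by nlinarith⟩
        have : 0 < s - 1 := by linarith
        refine mul_le_mul_of_nonneg_left ?_ (by positivity)
        exact Real.rpow_le_rpow_of_nonpos (by positivity) hle (by linarith)

lemma intervalIntegral_sub_mul_sub_setIntegral_Ici {f : ℝ → ℝ} {c x : ℝ} (hx : 0 ≤ x)
    (hf : IntegrableOn (fun y => f y - c) (Ici 0)) :
    (∫ y in (0:ℝ)..x, f y) - x * c - ∫ y in Ici 0, (f y - c) = ∫ y in Ici x, (c - f y) := by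
  have hf' : IntegrableOn (fun y => f y - c) (Ioi 0) := hf.mono_set Ioi_subset_Ici_self
  have hsplit := intervalIntegral.integral_interval_add_Ioi hf'
    (hf'.mono_set (Ioi_subset_Ioi hx))
  have hfx : IntervalIntegrable f volume 0 x := by
    simpa using ((intervalIntegrable_iff_integrableOn_Ioc_of_le hx).2
      (hf'.mono_set Ioc_subset_Ioi_self)).add (intervalIntegrable_const (c := c))
  rw [intervalIntegral.integral_sub hfx intervalIntegrable_const,
    intervalIntegral.integral_const, smul_eq_mul] at hsplit
  simp only [integral_Ici_eq_integral_Ioi, ← neg_sub (f _) c, integral_neg]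
  linarith

section Remainder

variable {e w : ℝ → ℝ} {eplus m E₀ x : ℝ}

lemma half_le_sub_of_mem_ball {a E : ℝ} (ha : m ≤ E₀ - a) (hE : E ∈ Metric.ball E₀ (m / 2)) :
    m / 2 ≤ E - a := by
  rw [Metric.mem_ball, Real.dist_eq, abs_sub_lt_iff] at hE
  linarith

variable (hm : 0 < m) (he : ∀ y, m ≤ E₀ - e y) (hep : m ≤ E₀ - eplus)
  (hdecay : ∀ y, 0 ≤ y → |e y - eplus| ≤ w y)
include hm he hep hdecay

lemma abs_sqrtTwoMulDeriv_sub_le_of_mem_ball (n : ℕ) {E y : ℝ}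
    (hE : E ∈ Metric.ball E₀ (m / 2)) (hy : 0 ≤ y) :
    |sqrtTwoMulDeriv n (E - eplus) - sqrtTwoMulDeriv n (E - e y)| ≤
      |sqrtTwoMulDeriv (n + 1) (m / 2)| * w y := by
  refine (abs_sqrtTwoMulDeriv_sub_le n (half_pos hm) (half_le_sub_of_mem_ball hep hE)
    (half_le_sub_of_mem_ball (he y) hE)).trans ?_
  rw [sub_sub_sub_cancel_left]
  exact mul_le_mul_of_nonneg_left (hdecay y hy) (abs_nonneg _)

variable (hw : IntegrableOn w (Ici 0))
include hw

lemma abs_setIntegral_sqrtTwoMulDeriv_sub_le (n : ℕ) {E : ℝ}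
    (hE : E ∈ Metric.ball E₀ (m / 2)) (hx : 0 ≤ x) :
    |∫ y in Ici x, (sqrtTwoMulDeriv n (E - eplus) - sqrtTwoMulDeriv n (E - e y))| ≤
      |sqrtTwoMulDeriv (n + 1) (m / 2)| * ∫ y in Ici x, w y := by
  rw [← Real.norm_eq_abs]
  refine (norm_integral_le_of_norm_le ((hw.mono_set (Ici_subset_Ici.2 hx)).const_mul _)
    ?_).trans_eq (integral_const_mul (μ := volume.restrict (Ici x)) _ w)
  filter_upwards [ae_restrict_mem measurableSet_Ici] with y hy
  exact abs_sqrtTwoMulDeriv_sub_le_of_mem_ball hm he hep hdecay n hE (hx.trans hy)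

variable (hemeas : Measurable e)
include hemeas

lemma integrableOn_sqrtTwoMulDeriv_sub (n : ℕ) {E : ℝ} (hE : E ∈ Metric.ball E₀ (m / 2))
    (hx : 0 ≤ x) :
    IntegrableOn (fun y => sqrtTwoMulDeriv n (E - eplus) - sqrtTwoMulDeriv n (E - e y))
      (Ici x) := by
  have hmeas : Measurable fun y => sqrtTwoMulDeriv n (E - eplus) - sqrtTwoMulDeriv n (E - e y) :=
    measurable_const.sub ((measurable_sqrtTwoMulDeriv n).comp (measurable_const.sub hemeas))
  refine ((hw.mono_set (Ici_subset_Ici.2 hx)).const_mul |sqrtTwoMulDeriv (n + 1) (m / 2)|).mono'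
    hmeas.aestronglyMeasurable ?_
  filter_upwards [ae_restrict_mem measurableSet_Ici] with y hy
  exact abs_sqrtTwoMulDeriv_sub_le_of_mem_ball hm he hep hdecay n hE (hx.trans hy)

theorem iteratedDeriv_remainder_eq_setIntegral (n : ℕ) (hx : 0 ≤ x) {E : ℝ}
    (hE : E ∈ Metric.ball E₀ (m / 2)) :
    iteratedDeriv n (fun E' => (∫ y in (0:ℝ)..x, √(2 * (E' - e y))) - x * √(2 * (E' - eplus))
        - ∫ y in Ici 0, (√(2 * (E' - e y)) - √(2 * (E' - eplus)))) E =
      ∫ y in Ici x, (sqrtTwoMulDeriv n (E - eplus) - sqrtTwoMulDeriv n (E - e y)) := by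
  have hpos : ∀ a, m ≤ E₀ - a → ∀ E' ∈ Metric.ball E₀ (m / 2), 0 < E' - a :=
    fun a ha E' hE' => (half_pos hm).trans_le (half_le_sub_of_mem_ball ha hE')
  refine iteratedDeriv_eq_integral_of_forall_dominated (μ := volume.restrict (Ici x))
    (F := fun k E' y => sqrtTwoMulDeriv k (E' - eplus) - sqrtTwoMulDeriv k (E' - e y))
    (bound := fun k y => |sqrtTwoMulDeriv (k + 1) (m / 2)| * w y) Metric.isOpen_ball
    (fun E' hE' => ?_) (fun k E' hE' => ?_) (fun k => ?_) (fun k => ?_) (fun k => ?_) n E hE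
  · have h := integrableOn_sqrtTwoMulDeriv_sub hm he hep hdecay hw hemeas 0 hE' le_rfl
    simp only [sqrtTwoMulDeriv_zero] at h ⊢
    exact intervalIntegral_sub_mul_sub_setIntegral_Ici hx
      (by simpa only [Pi.neg_def, neg_sub] using h.neg)
  · exact (integrableOn_sqrtTwoMulDeriv_sub hm he hep hdecay hw hemeas k hE' hx).1
  · exact (hw.mono_set (Ici_subset_Ici.2 hx)).const_mul _
  · filter_upwards [ae_restrict_mem measurableSet_Ici] with y hy E' hE'
    exact abs_sqrtTwoMulDeriv_sub_le_of_mem_ball hm he hep hdecay k hE' (hx.trans hy)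
  · filter_upwards with y E' hE'
    exact (hasDerivAt_sqrtTwoMulDeriv_sub k (hpos _ hep E' hE')).sub
      (hasDerivAt_sqrtTwoMulDeriv_sub k (hpos _ (he y) E' hE'))

end Remainder

theorem stmt_2_general (E₁ E₂ m₀ M₀ : ℝ) (hm₀ : 0 < m₀)
    (e : ℝ → ℝ) (hecont : Continuous e)
    (he : ∀ x : ℝ, ∀ E ∈ Set.Icc E₁ E₂, m₀ ≤ E - e x ∧ E - e x ≤ M₀)
    (ν : ℝ) (hν : 0 < ν) (eplus C : ℝ) (hC : 0 < C)
    (hdecay : ∀ x : ℝ, 0 ≤ x →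
      |e x - eplus| ≤ C * Real.sqrt (1 + x ^ 2) ^ (-(2 + ν)))
    (heplus : ∀ E ∈ Set.Icc E₁ E₂, m₀ ≤ E - eplus ∧ E - eplus ≤ M₀) :
    (∀ E ∈ Set.Icc E₁ E₂,
      IntegrableOn
        (fun y : ℝ => Real.sqrt (2 * (E - e y)) - Real.sqrt (2 * (E - eplus)))
        (Set.Ici (0 : ℝ))) ∧
    ∀ n : ℕ, ∃ C' : ℝ, ∀ x : ℝ, 0 ≤ x → ∀ E ∈ Set.Icc E₁ E₂,
      |iteratedDeriv n
          (fun E' : ℝ =>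
            (∫ y in (0 : ℝ)..x, Real.sqrt (2 * (E' - e y)))
              - x * Real.sqrt (2 * (E' - eplus))
              - ∫ y in Set.Ici (0 : ℝ),
                  (Real.sqrt (2 * (E' - e y)) - Real.sqrt (2 * (E' - eplus)))) E|
        ≤ C' * Real.sqrt (1 + x ^ 2) ^ (-(1 + ν)) := by
  have hw : IntegrableOn (fun y : ℝ => C * √(1 + y ^ 2) ^ (-(2 + ν))) (Ici 0) :=
    ((integrable_sqrt_one_add_sq_rpow_neg (by linarith)).const_mul C).integrableOn
  have hcenter : ∀ E : ℝ, E ∈ Metric.ball E (m₀ / 2) := fun E =>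
    Metric.mem_ball_self (by positivity)
  refine ⟨fun E hE => ?_, fun n =>
    ⟨|sqrtTwoMulDeriv (n + 1) (m₀ / 2)| * C * (√2 ^ (2 + ν) / (1 + ν)), fun x hx E hE => ?_⟩⟩
  · simpa only [sqrtTwoMulDeriv_zero, Pi.neg_def, neg_sub] using
      (integrableOn_sqrtTwoMulDeriv_sub hm₀ (fun y => (he y E hE).1) (heplus E hE).1 hdecay hw
        hecont.measurable 0 (hcenter E) le_rfl).neg
  have heE : ∀ y, m₀ ≤ E - e y := fun y => (he y E hE).1
  have hepE : m₀ ≤ E - eplus := (heplus E hE).1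
  set L := |sqrtTwoMulDeriv (n + 1) (m₀ / 2)|
  rw [iteratedDeriv_remainder_eq_setIntegral hm₀ heE hepE hdecay hw hecont.measurable n hx
    (hcenter E)]
  calc _ ≤ L * ∫ y in Ici x, C * √(1 + y ^ 2) ^ (-(2 + ν)) :=
        abs_setIntegral_sqrtTwoMulDeriv_sub_le hm₀ heE hepE hdecay hw n (hcenter E) hx
    _ = L * C * ∫ y in Ici x, √(1 + y ^ 2) ^ (-(2 + ν)) := by
        rw [integral_const_mul, mul_assoc]
    _ ≤ L * C * (√2 ^ (2 + ν) / (2 + ν - 1) * √(1 + x ^ 2) ^ (1 - (2 + ν))) := by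
        gcongr
        exact setIntegral_Ici_sqrt_one_add_sq_rpow_neg_le (by linarith) hx
    _ = L * C * (√2 ^ (2 + ν) / (1 + ν)) * √(1 + x ^ 2) ^ (-(1 + ν)) := by
        rw [show 2 + ν - 1 = 1 + ν by ring, show 1 - (2 + ν) = -(1 + ν) by ring]
        ring

/-- Δ = [E₁,E₂]; `e : ℝ → ℝ` continuous with `m₀ ≤ E − e x ≤ M₀` on ℝ × Δ, decay
`|e x − e₊| ≤ C⟨x⟩^{-(2+ν)}` for `x ≥ 0` (ν > 0), and `m₀ ≤ E − e₊ ≤ M₀` on Δ;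
`k(x,E) := √(2(E − e x))`, `k₊(E) := √(2(E − e₊))`.
Then for every `E ∈ Δ` the improper integral `ω(E) := ∫₀^∞ (k(y,E) − k₊(E)) dy`
converges, and the remainder
`r(x,E) := ∫₀ˣ k(y,E) dy − x k₊(E) − ω(E)` satisfies: for every `n` there is `C′(n)`
with `|∂ⁿ/∂Eⁿ r(x,E)| ≤ C′(n)⟨x⟩^{-(1+ν)}` for all `x ≥ 0`, uniformly in `E ∈ Δ`. -/
theorem stmt_2 (E₁ E₂ m₀ M₀ : ℝ) (hm₀ : 0 < m₀) (hM₀ : m₀ ≤ M₀)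
    (e : ℝ → ℝ) (hecont : Continuous e)
    (he : ∀ x : ℝ, ∀ E ∈ Set.Icc E₁ E₂, m₀ ≤ E - e x ∧ E - e x ≤ M₀)
    (ν : ℝ) (hν : 0 < ν) (eplus C : ℝ) (hC : 0 < C)
    (hdecay : ∀ x : ℝ, 0 ≤ x →
      |e x - eplus| ≤ C * Real.sqrt (1 + x ^ 2) ^ (-(2 + ν)))
    (heplus : ∀ E ∈ Set.Icc E₁ E₂, m₀ ≤ E - eplus ∧ E - eplus ≤ M₀) :
    (∀ E ∈ Set.Icc E₁ E₂,
      IntegrableOn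
        (fun y : ℝ => Real.sqrt (2 * (E - e y)) - Real.sqrt (2 * (E - eplus)))
        (Set.Ici (0 : ℝ))) ∧
    ∀ n : ℕ, ∃ C' : ℝ, ∀ x : ℝ, 0 ≤ x → ∀ E ∈ Set.Icc E₁ E₂,
      |iteratedDeriv n
          (fun E' : ℝ =>
            (∫ y in (0 : ℝ)..x, Real.sqrt (2 * (E' - e y)))
              - x * Real.sqrt (2 * (E' - eplus))
              - ∫ y in Set.Ici (0 : ℝ),
                  (Real.sqrt (2 * (E' - e y)) - Real.sqrt (2 * (E' - eplus)))) E|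
        ≤ C' * Real.sqrt (1 + x ^ 2) ^ (-(1 + ν)) :=
  stmt_2_general E₁ E₂ m₀ M₀ hm₀ e hecont he ν hν eplus C hC hdecay heplus
end

section
/- There exist C > 0 and δ₁ ∈ (0,δ₀], depending only on L, K, m₀ and Δ, such that for all δ ∈ (0,δ₁] and all E ∈ Δ: |∫₀¹ (2(E − w(t)))^{-1/2} ζ′(t) dt − (2(E − e_c))^{-3/2} ∫₀¹ w(t) ζ′(t) dt| ≤ C δ³ and |∫₀¹ (2(E − w(t)))^{-3/2} ζ′(t) dt − 3·(2(E − e_c))^{-5/2} ∫₀¹ w(t) ζ′(t) dt| ≤ C δ³. -/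
/-!
Along a closed loop `∫ dζ = 0`, so from `∫ f(w) dζ` one may subtract the first-order Taylor
polynomial of `f(u) = (2(E - u))^p` at `e_c` for free. What remains is the Taylor remainder,
which is `O(|w - e_c|²) = O(δ²)` uniformly because `Re (2(E - u)) ≥ m₀` keeps `u` away from the
branch cut, integrated against `|dζ|` of total mass `O(δ)`. For `p = -1/2, -3/2` the linear
coefficient `-2p (2(E - e_c))^(p-1)` is `(2(E - e_c))^(-3/2)`, resp. `3 (2(E - e_c))^(-5/2)`.
-/

open Complex Set intervalIntegral

theorem Convex.norm_image_sub_sub_smul_deriv_le {𝕜 F : Type*} [RCLike 𝕜] [NormedAddCommGroup F]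
    [NormedSpace 𝕜 F] {f f' f'' : 𝕜 → F} {s : Set 𝕜} {M : ℝ} (hs : Convex ℝ s)
    (hf : ∀ x ∈ s, HasDerivWithinAt f (f' x) s x)
    (hf' : ∀ x ∈ s, HasDerivWithinAt f' (f'' x) s x) (hM : ∀ x ∈ s, ‖f'' x‖ ≤ M)
    {x y : 𝕜} (hx : x ∈ s) (hy : y ∈ s) :
    ‖f y - f x - (y - x) • f' x‖ ≤ M * ‖y - x‖ ^ 2 := by
  set t := s ∩ Metric.closedBall x ‖y - x‖
  have ht : Convex ℝ t := hs.inter (convex_closedBall _ _)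
  have hxt : x ∈ t := ⟨hx, Metric.mem_closedBall_self (norm_nonneg _)⟩
  have hyt : y ∈ t := ⟨hy, by simp [dist_eq_norm]⟩
  have hM0 : 0 ≤ M := (norm_nonneg _).trans (hM x hx)
  have hf'_lip : ∀ z ∈ t, ‖f' z - f' x‖ ≤ M * ‖y - x‖ := fun z hz =>
    calc ‖f' z - f' x‖ ≤ M * ‖z - x‖ :=
          Convex.norm_image_sub_le_of_norm_hasDerivWithin_le hf' hM hs hx hz.1
      _ ≤ M * ‖y - x‖ := by
          gcongr
          simpa [dist_eq_norm] using hz.2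
  have key := ht.norm_image_sub_le_of_norm_hasDerivWithin_le
    (f := fun z => f z - z • f' x) (f' := fun z => f' z - f' x)
    (fun z hz => (((hf z hz.1).mono inter_subset_left).sub
      ((hasDerivWithinAt_id z t).smul_const (f' x))).congr_deriv (by rw [one_smul]))
    hf'_lip hxt hyt
  calc ‖f y - f x - (y - x) • f' x‖ = ‖(f y - y • f' x) - (f x - x • f' x)‖ := by
        rw [sub_smul]; congr 1; abel
    _ ≤ M * ‖y - x‖ * ‖y - x‖ := key
    _ = M * ‖y - x‖ ^ 2 := by ring

theorem Complex.norm_cpow_sub_sub_le {p m : ℝ} (hp : p ≤ 2) (hm : 0 < m) {u v : ℂ}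
    (hu : m ≤ u.re) (hv : m ≤ v.re) :
    ‖u ^ (p : ℂ) - v ^ (p : ℂ) - (u - v) * (p * v ^ ((p : ℂ) - 1))‖
      ≤ |p * (p - 1)| * m ^ (p - 2) * ‖u - v‖ ^ 2 := by
  have hslit : ∀ z ∈ {z : ℂ | m ≤ z.re}, z ∈ slitPlane := fun z hz =>
    mem_slitPlane_iff.2 (Or.inl (hm.trans_le hz))
  refine Convex.norm_image_sub_sub_smul_deriv_le (convex_halfSpace_re_ge (r := m))
    (f := fun z : ℂ => z ^ (p : ℂ)) (f'' := fun z : ℂ => p * ((p - 1) * z ^ ((p : ℂ) - 1 - 1)))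
    (fun z hz => (hasStrictDerivAt_cpow_const (hslit z hz)).hasDerivAt.hasDerivWithinAt)
    (fun z hz =>
      ((hasStrictDerivAt_cpow_const (hslit z hz)).hasDerivAt.const_mul _).hasDerivWithinAt)
    (fun z hz => ?_) hv hu
  have hexp : (p : ℂ) - 1 - 1 = ((p - 2 : ℝ) : ℂ) := by push_cast; ring
  have hz : m ≤ ‖z‖ := le_trans hz (re_le_norm z)
  calc ‖(p : ℂ) * ((p - 1) * z ^ ((p : ℂ) - 1 - 1))‖ = |p * (p - 1)| * ‖z‖ ^ (p - 2) := by
        rw [hexp, norm_mul, norm_mul, norm_cpow_real, abs_mul, mul_assoc]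
        norm_cast
    _ ≤ |p * (p - 1)| * m ^ (p - 2) :=
        mul_le_mul_of_nonneg_left (Real.rpow_le_rpow_of_nonpos hm hz (by linarith)) (abs_nonneg _)

theorem norm_integral_mul_deriv_le_of_closed {a b M : ℝ} (hab : a ≤ b) {ζ dζ h : ℝ → ℂ}
    (hζ : ∀ t ∈ Icc a b, HasDerivWithinAt ζ (dζ t) (Icc a b) t)
    (hdζ : ContinuousOn dζ (Icc a b)) (hclosed : ζ a = ζ b)
    (hh : ContinuousOn h (Icc a b)) (c : ℂ) (hM : ∀ t ∈ Icc a b, ‖h t - c‖ ≤ M) :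
    ‖∫ t in a..b, h t * dζ t‖ ≤ M * ∫ t in a..b, ‖dζ t‖ := by
  have hdζ_int : IntervalIntegrable dζ MeasureTheory.volume a b :=
    hdζ.intervalIntegrable_of_Icc hab
  have hhdζ_int : IntervalIntegrable (fun t => h t * dζ t) MeasureTheory.volume a b :=
    (hh.mul hdζ).intervalIntegrable_of_Icc hab
  have hζ_loop : ∫ t in a..b, dζ t = 0 := by
    rw [integral_eq_sub_of_hasDeriv_right_of_le hab (fun t ht => (hζ t ht).continuousWithinAt)
      (fun t ht => (hζ t (Ioo_subset_Icc_self ht)).mono_of_mem_nhdsWithin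
        (Icc_mem_nhdsGT_of_mem ⟨ht.1.le, ht.2⟩)) hdζ_int, hclosed, sub_self]
  have hshift : ∫ t in a..b, h t * dζ t = ∫ t in a..b, (h t - c) * dζ t := by
    simp only [sub_mul]
    rw [integral_sub hhdζ_int (hdζ_int.const_mul c), integral_const_mul, hζ_loop, mul_zero,
      sub_zero]
  calc ‖∫ t in a..b, h t * dζ t‖ ≤ ∫ t in a..b, M * ‖dζ t‖ := by
        rw [hshift]
        refine norm_integral_le_of_norm_le hab (MeasureTheory.ae_of_all _ fun t ht => ?_)
          ((hdζ.norm.intervalIntegrable_of_Icc hab).const_mul M)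
        rw [norm_mul]
        exact mul_le_mul_of_nonneg_right (hM t (Ioc_subset_Icc_self ht)) (norm_nonneg _)
    _ = M * ∫ t in a..b, ‖dζ t‖ := integral_const_mul M _

theorem norm_integral_cpow_sub_le {a b p m r E ec : ℝ} (hab : a ≤ b) (hp : p ≤ 2) (hm : 0 < m)
    (hE : m ≤ E - ec) (hr : r ≤ m / 2) {ζ dζ w : ℝ → ℂ}
    (hζ : ∀ t ∈ Icc a b, HasDerivWithinAt ζ (dζ t) (Icc a b) t)
    (hdζ : ContinuousOn dζ (Icc a b)) (hclosed : ζ a = ζ b)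
    (hw : ContinuousOn w (Icc a b)) (hwr : ∀ t ∈ Icc a b, ‖w t - ec‖ ≤ r) :
    ‖(∫ t in a..b, (2 * ((E : ℂ) - w t)) ^ (p : ℂ) * dζ t)
        - -2 * p * ((2 * (E - ec) : ℝ) : ℂ) ^ ((p : ℂ) - 1) * ∫ t in a..b, w t * dζ t‖
      ≤ 4 * |p * (p - 1)| * m ^ (p - 2) * r ^ 2 * ∫ t in a..b, ‖dζ t‖ := by
  set v : ℂ := ((2 * (E - ec) : ℝ) : ℂ)
  set c : ℂ := -2 * p * v ^ ((p : ℂ) - 1)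
  have hv : m ≤ v.re := by simp only [v, ofReal_re]; linarith
  have hu : ∀ t ∈ Icc a b, m ≤ (2 * ((E : ℂ) - w t)).re := fun t ht => by
    have hre : |(w t).re - ec| ≤ r := by
      simpa using (abs_re_le_norm (w t - ec)).trans (hwr t ht)
    simp only [mul_re, sub_re, ofReal_re, re_ofNat, im_ofNat, sub_im, ofReal_im, zero_mul,
      sub_zero]
    linarith [(abs_le.1 hre).2]
  have hupow : ContinuousOn (fun t => (2 * ((E : ℂ) - w t)) ^ (p : ℂ)) (Icc a b) :=
    (continuousOn_const.mul (continuousOn_const.sub hw)).cpow_const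
      fun t ht => mem_slitPlane_iff.2 (Or.inl (hm.trans_le (hu t ht)))
  have hcombine : (∫ t in a..b, (2 * ((E : ℂ) - w t)) ^ (p : ℂ) * dζ t)
      - c * ∫ t in a..b, w t * dζ t
      = ∫ t in a..b, ((2 * ((E : ℂ) - w t)) ^ (p : ℂ) - c * w t) * dζ t := by
    have hint₁ : IntervalIntegrable (fun t => (2 * ((E : ℂ) - w t)) ^ (p : ℂ) * dζ t)
        MeasureTheory.volume a b := (hupow.mul hdζ).intervalIntegrable_of_Icc hab
    have hint₂ : IntervalIntegrable (fun t => c * (w t * dζ t)) MeasureTheory.volume a b :=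
      ((hw.mul hdζ).intervalIntegrable_of_Icc hab).const_mul c
    rw [← integral_const_mul, ← integral_sub hint₁ hint₂]
    simp only [sub_mul, mul_assoc]
  rw [hcombine]
  refine norm_integral_mul_deriv_le_of_closed hab hζ hdζ hclosed
    (hupow.sub (continuousOn_const.mul hw)) (v ^ (p : ℂ) - c * ec) fun t ht => ?_
  have hdiff : 2 * ((E : ℂ) - w t) - v = -2 * (w t - ec) := by simp only [v]; push_cast; ring
  calc ‖(2 * ((E : ℂ) - w t)) ^ (p : ℂ) - c * w t - (v ^ (p : ℂ) - c * ec)‖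
      = ‖(2 * ((E : ℂ) - w t)) ^ (p : ℂ) - v ^ (p : ℂ)
          - (2 * ((E : ℂ) - w t) - v) * (p * v ^ ((p : ℂ) - 1))‖ := by
        rw [hdiff]; congr 1; simp only [c]; ring
    _ ≤ |p * (p - 1)| * m ^ (p - 2) * ‖2 * ((E : ℂ) - w t) - v‖ ^ 2 :=
        norm_cpow_sub_sub_le hp hm (hu t ht) hv
    _ = 4 * |p * (p - 1)| * m ^ (p - 2) * ‖w t - ec‖ ^ 2 := by
        rw [hdiff, norm_mul]; norm_num; ring
    _ ≤ 4 * |p * (p - 1)| * m ^ (p - 2) * r ^ 2 := by gcongr; exact hwr t ht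

theorem stmt_8_general (E₁ E₂ ec m₀ L K δ₀ : ℝ)
    (hm₀ : 0 < m₀) (hgap : ∀ E ∈ Set.Icc E₁ E₂, m₀ ≤ E - ec)
    (hL : 0 < L) (hK : 0 < K) (hδ₀ : 0 < δ₀) :
    ∃ C : ℝ, 0 < C ∧ ∃ δ₁ ∈ Set.Ioc (0 : ℝ) δ₀,
      ∀ ζ dζ w : ℝ → ℝ → ℂ,
        (∀ δ ∈ Set.Ioc (0 : ℝ) δ₀,
          (∀ t ∈ Set.Icc (0 : ℝ) 1,
            HasDerivWithinAt (ζ δ) (dζ δ t) (Set.Icc (0 : ℝ) 1) t) ∧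
          ContinuousOn (dζ δ) (Set.Icc (0 : ℝ) 1) ∧
          ζ δ 0 = ζ δ 1 ∧
          (∫ t in (0 : ℝ)..1, ‖dζ δ t‖) ≤ L * δ ∧
          ContinuousOn (w δ) (Set.Icc (0 : ℝ) 1) ∧
          (∀ t ∈ Set.Icc (0 : ℝ) 1, ‖w δ t - (ec : ℂ)‖ ≤ K * δ)) →
        ∀ δ ∈ Set.Ioc (0 : ℝ) δ₁, ∀ E ∈ Set.Icc E₁ E₂,
          ‖(∫ t in (0 : ℝ)..1, (2 * ((E : ℂ) - w δ t)) ^ (-(1 / 2) : ℂ) * dζ δ t)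
              - ((2 * (E - ec) : ℝ) : ℂ) ^ (-(3 / 2) : ℂ) *
                  ∫ t in (0 : ℝ)..1, w δ t * dζ δ t‖ ≤ C * δ ^ 3 ∧
          ‖(∫ t in (0 : ℝ)..1, (2 * ((E : ℂ) - w δ t)) ^ (-(3 / 2) : ℂ) * dζ δ t)
              - 3 * ((2 * (E - ec) : ℝ) : ℂ) ^ (-(5 / 2) : ℂ) *
                  ∫ t in (0 : ℝ)..1, w δ t * dζ δ t‖ ≤ C * δ ^ 3 := by
  refine ⟨(3 * m₀ ^ (-(5 / 2) : ℝ) + 15 * m₀ ^ (-(7 / 2) : ℝ)) * (K ^ 2 * L), by positivity,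
    min δ₀ (m₀ / (2 * K)), ⟨lt_min hδ₀ (by positivity), min_le_left _ _⟩, ?_⟩
  intro ζ dζ w hcurve δ hδ E hE
  have hδ0 : 0 < δ := hδ.1
  have hKδ : K * δ ≤ m₀ / 2 := by
    have := (le_div_iff₀ (by positivity)).1 (hδ.2.trans (min_le_right _ _))
    linarith
  obtain ⟨hζ, hdζ, hclosed, hlength, hw, hwK⟩ := hcurve δ ⟨hδ0, hδ.2.trans (min_le_left _ _)⟩
  have hremainder := fun (p : ℝ) (hp : p ≤ 2) => norm_integral_cpow_sub_le zero_le_one hp hm₀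
    (hgap E hE) hKδ hζ hdζ hclosed hw hwK
  have h₁ := hremainder (-(1 / 2)) (by norm_num)
  have h₃ := hremainder (-(3 / 2)) (by norm_num)
  -- evaluates the coefficients `-2p`, `4|p(p-1)|` and the exponents `p - 1`, `p - 2`
  norm_num at h₁ h₃
  have hscale : ∀ X : ℝ, 0 ≤ X →
      X * (K * δ) ^ 2 * (∫ t in (0 : ℝ)..1, ‖dζ δ t‖) ≤ X * (K ^ 2 * L) * δ ^ 3 := fun X hX =>
    calc X * (K * δ) ^ 2 * (∫ t in (0 : ℝ)..1, ‖dζ δ t‖) ≤ X * (K * δ) ^ 2 * (L * δ) := by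
          gcongr
      _ = X * (K ^ 2 * L) * δ ^ 3 := by ring
  push_cast
  constructor
  · refine (h₁.trans (hscale _ (by positivity))).trans ?_
    gcongr
    exact le_add_of_nonneg_right (by positivity)
  · refine (h₃.trans (hscale _ (by positivity))).trans ?_
    gcongr
    exact le_add_of_nonneg_left (by positivity)

/-- Same setting as Statement 7.  There exist `C > 0` and `δ₁ ∈ (0,δ₀]`, depending only
on `L, K, m₀, Δ`, such that for all `δ ∈ (0,δ₁]` and all `E ∈ Δ`:
`|∫₀¹ (2(E−w))^{-1/2} ζ′ dt − (2(E−e_c))^{-3/2} ∫₀¹ w ζ′ dt| ≤ Cδ³` and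
`|∫₀¹ (2(E−w))^{-3/2} ζ′ dt − 3(2(E−e_c))^{-5/2} ∫₀¹ w ζ′ dt| ≤ Cδ³`. -/
theorem stmt_8 (E₁ E₂ ec m₀ L K δ₀ : ℝ)
    (h12 : E₁ ≤ E₂) (hm₀ : 0 < m₀) (hgap : ∀ E ∈ Set.Icc E₁ E₂, m₀ ≤ E - ec)
    (hL : 0 < L) (hK : 0 < K) (hδ₀ : 0 < δ₀) :
    ∃ C : ℝ, 0 < C ∧ ∃ δ₁ ∈ Set.Ioc (0 : ℝ) δ₀,
      ∀ ζ dζ w : ℝ → ℝ → ℂ,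
        (∀ δ ∈ Set.Ioc (0 : ℝ) δ₀,
          (∀ t ∈ Set.Icc (0 : ℝ) 1,
            HasDerivWithinAt (ζ δ) (dζ δ t) (Set.Icc (0 : ℝ) 1) t) ∧
          ContinuousOn (dζ δ) (Set.Icc (0 : ℝ) 1) ∧
          ζ δ 0 = ζ δ 1 ∧
          (∫ t in (0 : ℝ)..1, ‖dζ δ t‖) ≤ L * δ ∧
          ContinuousOn (w δ) (Set.Icc (0 : ℝ) 1) ∧
          (∀ t ∈ Set.Icc (0 : ℝ) 1, ‖w δ t - (ec : ℂ)‖ ≤ K * δ)) →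
        ∀ δ ∈ Set.Ioc (0 : ℝ) δ₁, ∀ E ∈ Set.Icc E₁ E₂,
          ‖(∫ t in (0 : ℝ)..1, (2 * ((E : ℂ) - w δ t)) ^ (-(1 / 2) : ℂ) * dζ δ t)
              - ((2 * (E - ec) : ℝ) : ℂ) ^ (-(3 / 2) : ℂ) *
                  ∫ t in (0 : ℝ)..1, w δ t * dζ δ t‖ ≤ C * δ ^ 3 ∧
          ‖(∫ t in (0 : ℝ)..1, (2 * ((E : ℂ) - w δ t)) ^ (-(3 / 2) : ℂ) * dζ δ t)
              - 3 * ((2 * (E - ec) : ℝ) : ℂ) ^ (-(5 / 2) : ℂ) *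
                  ∫ t in (0 : ℝ)..1, w δ t * dζ δ t‖ ≤ C * δ ^ 3 :=
  stmt_8_general E₁ E₂ ec m₀ L K δ₀ hm₀ hgap hL hK hδ₀
end

section
/- Suppose in addition there are constants 0 < c₁ ≤ c₂ such that Γ₀(δ) := −Im ∫₀¹ w(t) ζ′(t) dt satisfies c₁δ² ≤ Γ₀(δ) ≤ c₂δ² for all δ ∈ (0,δ₀]. Then there exists δ₁ ∈ (0,δ₀] such that for every δ ∈ (0,δ₁] the function β(E) := Im ∫₀¹ √(2(E − w(t))) ζ′(t) dt is positive, strictly decreasing, and strictly convex on Δ. -/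
/-!
Along a closed loop `∫ ζ' = 0`, so linearising `z ↦ (2 (E - z)) ^ s` at `e_c` gives
`Im ∫₀¹ (2 (E - w)) ^ s ζ' = 2 s (2 (E - e_c)) ^ (s - 1) Γ₀(δ) + O(δ³)`: the remainder is quadratic
in `|w - e_c| ≤ K δ` and is integrated against `|ζ'|`, of total mass at most `L δ`. As
`Γ₀(δ) ≥ c₁ δ²`, for small `δ` the sign of this integral is the sign of `s`, uniformly on `Δ`.
Differentiating under the integral sign, `s = 1/2, -1/2, -3/2` give `β`, `β'` and `-β''`.
-/

open Set Complex Filter Topology MeasureTheory intervalIntegral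

theorem Convex.norm_image_sub_sub_smul_le {𝕜 G : Type*} [RCLike 𝕜] [NormedAddCommGroup G]
    [NormedSpace 𝕜 G] {f f' f'' : 𝕜 → G} {s : Set 𝕜} {C : ℝ} (hs : Convex ℝ s)
    (hf : ∀ z ∈ s, HasDerivWithinAt f (f' z) s z)
    (hf' : ∀ z ∈ s, HasDerivWithinAt f' (f'' z) s z)
    (hC : ∀ z ∈ s, ‖f'' z‖ ≤ C) {x y : 𝕜} (hx : x ∈ s) (hy : y ∈ s) :
    ‖f y - f x - (y - x) • f' x‖ ≤ C * ‖y - x‖ ^ 2 := by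
  set t := s ∩ Metric.closedBall x ‖y - x‖
  have hf'_near : ∀ z ∈ t, ‖f' z - f' x‖ ≤ C * ‖y - x‖ := fun z hz =>
    (hs.norm_image_sub_le_of_norm_hasDerivWithin_le hf' hC hx hz.1).trans <|
      mul_le_mul_of_nonneg_left (by simpa [dist_eq_norm] using hz.2)
        ((norm_nonneg _).trans (hC x hx))
  have hg : ∀ z ∈ t, HasDerivWithinAt (fun z => f z - (z - x) • f' x) (f' z - f' x) t z :=
    fun z hz => (((hf z hz.1).mono inter_subset_left).sub
      (((hasDerivWithinAt_id z t).sub_const x).smul_const (f' x))).congr_deriv (by simp)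
  have := (hs.inter (convex_closedBall _ _)).norm_image_sub_le_of_norm_hasDerivWithin_le hg
    hf'_near ⟨hx, by simp⟩ ⟨hy, by simp [dist_eq_norm]⟩
  rw [sub_self, zero_smul, sub_zero] at this
  rwa [sub_right_comm, sq, ← mul_assoc]

theorem Complex.norm_cpow_le_rpow_of_le_re {m s : ℝ} {u : ℂ} (hm : 0 < m) (hu : m ≤ u.re)
    (hs : s ≤ 0) : ‖u ^ (s : ℂ)‖ ≤ m ^ s := by
  have hu0 : u ≠ 0 := fun h => by simp [h] at hu; linarith
  rw [norm_cpow_of_ne_zero hu0]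
  simp only [ofReal_re, ofReal_im, mul_zero, Real.exp_zero, div_one]
  exact Real.rpow_le_rpow_of_nonpos hm (hu.trans ((le_abs_self _).trans (abs_re_le_norm u))) hs

theorem Complex.norm_cpow_sub_sub_le_of_le_re {m s : ℝ} {u v : ℂ} (hm : 0 < m) (hs : s ≤ 2)
    (hu : m ≤ u.re) (hv : m ≤ v.re) :
    ‖v ^ (s : ℂ) - u ^ (s : ℂ) - (s : ℂ) * u ^ ((s : ℂ) - 1) * (v - u)‖
      ≤ |s * (s - 1)| * m ^ (s - 2) * ‖v - u‖ ^ 2 := by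
  have hslit : ∀ z ∈ {z : ℂ | m ≤ z.re}, z ∈ slitPlane := fun z hz => Or.inl (hm.trans_le hz)
  have := (convex_halfSpace_re_ge m).norm_image_sub_sub_smul_le (C := |s * (s - 1)| * m ^ (s - 2))
    (f := fun z => z ^ (s : ℂ)) (f' := fun z => (s : ℂ) * z ^ ((s : ℂ) - 1))
    (f'' := fun z => (s : ℂ) * (((s : ℂ) - 1) * z ^ ((s : ℂ) - 1 - 1)))
    (fun z hz => (hasStrictDerivAt_cpow_const (hslit z hz)).hasDerivAt.hasDerivWithinAt)
    (fun z hz =>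
      ((hasStrictDerivAt_cpow_const (hslit z hz)).hasDerivAt.const_mul _).hasDerivWithinAt)
    (fun z hz => ?_) hu hv
  · simpa [smul_eq_mul, mul_comm, mul_left_comm, mul_assoc] using this
  · have h2 : ((s : ℂ) - 1 - 1) = ((s - 2 : ℝ) : ℂ) := by push_cast; ring
    rw [← mul_assoc, norm_mul, h2]
    have hcoef : (s : ℂ) * (s - 1) = ((s * (s - 1) : ℝ) : ℂ) := by push_cast; ring
    rw [hcoef, norm_real, Real.norm_eq_abs]
    exact mul_le_mul_of_nonneg_left (norm_cpow_le_rpow_of_le_re hm hz (by linarith)) (abs_nonneg _)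

theorem strictAntiOn_of_hasDerivAt_neg {D : Set ℝ} (hD : Convex ℝ D) {f f' : ℝ → ℝ}
    (hf : ∀ x ∈ D, HasDerivAt f (f' x) x) (hf' : ∀ x ∈ D, f' x < 0) : StrictAntiOn f D :=
  strictAntiOn_of_deriv_neg hD (fun x hx => (hf x hx).continuousAt.continuousWithinAt)
    fun x hx => (hf x (interior_subset hx)).deriv ▸ hf' x (interior_subset hx)

theorem strictConvexOn_of_hasDerivAt2_pos {D : Set ℝ} (hD : Convex ℝ D) {f f' f'' : ℝ → ℝ}
    (hf : ∀ x ∈ D, HasDerivAt f (f' x) x) (hf' : ∀ x ∈ D, HasDerivAt f' (f'' x) x)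
    (hf'' : ∀ x ∈ D, 0 < f'' x) : StrictConvexOn ℝ D f :=
  StrictMonoOn.strictConvexOn_of_deriv hD (fun x hx => (hf x hx).continuousAt.continuousWithinAt)
    (((strictMonoOn_of_hasDerivWithinAt_pos hD
      (fun x hx => (hf' x hx).continuousAt.continuousWithinAt)
      (fun x hx => (hf' x (interior_subset hx)).hasDerivWithinAt)
      (fun x hx => hf'' x (interior_subset hx))).mono interior_subset).congr
      fun x hx => ((hf x (interior_subset hx)).deriv).symm)

theorem eventually_nhdsGT_zero_mul_lt {A : ℝ} (hA : 0 < A) (B : ℝ) :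
    ∀ᶠ δ in 𝓝[>] 0, B * δ < A := by
  have hlim : Tendsto (fun δ : ℝ => B * δ) (𝓝[>] 0) (𝓝 0) := by
    simpa using ((continuous_const_mul B).tendsto 0).mono_left nhdsWithin_le_nhds
  exact hlim.eventually (gt_mem_nhds hA)

theorem eventually_nhdsGT_zero_mul_pow_three_lt {A : ℝ} (hA : 0 < A) (B : ℝ) :
    ∀ᶠ δ in 𝓝[>] 0, B * δ ^ 3 < A * δ ^ 2 := by
  filter_upwards [eventually_nhdsGT_zero_mul_lt hA B, self_mem_nhdsWithin] with δ hδ hδ0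
  calc B * δ ^ 3 = (B * δ) * δ ^ 2 := by ring
    _ < A * δ ^ 2 := mul_lt_mul_of_pos_right hδ (pow_pos hδ0 2)

theorem intervalIntegral.integral_eq_zero_of_hasDerivWithinAt_of_eq {E : Type*}
    [NormedAddCommGroup E] [NormedSpace ℝ E] [CompleteSpace E] {a b : ℝ} (hab : a ≤ b)
    {f f' : ℝ → E}
    (hf : ∀ t ∈ Icc a b, HasDerivWithinAt f (f' t) (Icc a b) t)
    (hf' : IntervalIntegrable f' volume a b) (hfab : f a = f b) :
    ∫ t in a..b, f' t = 0 := by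
  rw [integral_eq_sub_of_hasDerivAt_of_le hab (fun t ht => (hf t ht).continuousWithinAt)
    (fun t ht => (hf t (Ioo_subset_Icc_self ht)).hasDerivAt (Icc_mem_nhds ht.1 ht.2)) hf',
    hfab, sub_self]

theorem norm_integral_mul_sub_le_of_integral_eq_zero {f W dZ : ℝ → ℂ} {c g e : ℂ} {C ℓ : ℝ}
    (hloop : ∫ t in (0 : ℝ)..1, dZ t = 0) (hf : ContinuousOn f (Icc 0 1))
    (hW : ContinuousOn W (Icc 0 1)) (hdZ : ContinuousOn dZ (Icc 0 1))
    (hlen : ∫ t in (0 : ℝ)..1, ‖dZ t‖ ≤ ℓ)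
    (hR : ∀ t ∈ Icc (0 : ℝ) 1, ‖f t - c - g * (W t - e)‖ ≤ C) :
    ‖(∫ t in (0 : ℝ)..1, f t * dZ t) - g * ∫ t in (0 : ℝ)..1, W t * dZ t‖ ≤ C * ℓ := by
  have hC : 0 ≤ C := (norm_nonneg _).trans (hR 0 ⟨le_rfl, zero_le_one⟩)
  have hfZ : IntervalIntegrable (fun t => f t * dZ t) volume 0 1 :=
    (hf.mul hdZ).intervalIntegrable_of_Icc zero_le_one
  have hWZ : IntervalIntegrable (fun t => W t * dZ t) volume 0 1 :=
    (hW.mul hdZ).intervalIntegrable_of_Icc zero_le_one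
  have hZ := hdZ.intervalIntegrable_of_Icc (μ := volume) zero_le_one
  -- the constant part of the linearization integrates to zero along the loop
  have hsplit : (∫ t in (0 : ℝ)..1, (f t - c - g * (W t - e)) * dZ t)
      = (∫ t in (0 : ℝ)..1, f t * dZ t) - g * ∫ t in (0 : ℝ)..1, W t * dZ t := by
    rw [integral_congr (g := fun t => f t * dZ t - g * (W t * dZ t) - (c - g * e) * dZ t)
        (fun t _ => by ring),
      integral_sub (hfZ.sub (hWZ.const_mul g)) (hZ.const_mul _), integral_sub hfZ (hWZ.const_mul g),
      intervalIntegral.integral_const_mul, intervalIntegral.integral_const_mul, hloop, mul_zero,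
      sub_zero]
  rw [← hsplit]
  calc ‖∫ t in (0 : ℝ)..1, (f t - c - g * (W t - e)) * dZ t‖
      ≤ ∫ t in (0 : ℝ)..1, C * ‖dZ t‖ :=
        norm_integral_le_of_norm_le (μ := volume) zero_le_one
          (ae_of_all _ fun t ht => by
            rw [norm_mul]
            exact mul_le_mul_of_nonneg_right (hR t (Ioc_subset_Icc_self ht)) (norm_nonneg _))
          (hZ.norm.const_mul C)
    _ ≤ C * ℓ := by
      rw [intervalIntegral.integral_const_mul]; exact mul_le_mul_of_nonneg_left hlen hC

/-- For `s = 1/2` the imaginary part of this integral is `β(E)`. -/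
noncomputable def cpowLoopIntegral (W dZ : ℝ → ℂ) (s E : ℝ) : ℂ :=
  ∫ t in (0 : ℝ)..1, (2 * ((E : ℂ) - W t)) ^ (s : ℂ) * dZ t

theorem hasDerivAt_two_mul_ofReal_sub_cpow_mul {z : ℂ} {s : ℂ} (c : ℂ) {x : ℝ}
    (h : 2 * ((x : ℂ) - z) ∈ slitPlane) :
    HasDerivAt (fun y : ℝ => (2 * ((y : ℂ) - z)) ^ s * c)
      (2 * s * (2 * ((x : ℂ) - z)) ^ (s - 1) * c) x := by
  have hz : HasDerivAt (fun y : ℂ => (2 * (y - z)) ^ s) (s * (2 * ((x : ℂ) - z)) ^ (s - 1) * 2) x :=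
    HasDerivAt.cpow_const (f := fun y : ℂ => 2 * (y - z))
      (by simpa using ((hasDerivAt_id (x : ℂ)).sub_const z).const_mul 2) h
  exact (hz.comp_ofReal.mul_const c).congr_deriv (by ring)

section cpowLoopIntegral

variable {W dZ : ℝ → ℂ} {E₁ E₂ ec m₀ ρ ℓ γ : ℝ}

theorem hasDerivAt_cpowLoopIntegral {s m E₀ : ℝ} (hs : s ≤ 1) (hm : 0 < m)
    (hW : ContinuousOn W (Icc 0 1)) (hdZ : ContinuousOn dZ (Icc 0 1))
    (hre : ∀ t ∈ Icc (0 : ℝ) 1, m ≤ 2 * (E₀ - (W t).re)) :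
    HasDerivAt (cpowLoopIntegral W dZ s) (2 * s * cpowLoopIntegral W dZ (s - 1) E₀) E₀ := by
  have hre' : ∀ E ∈ Metric.ball E₀ (m / 4), ∀ t ∈ Icc (0 : ℝ) 1,
      m / 2 ≤ (2 * ((E : ℂ) - W t)).re := fun E hE t ht => by
    have := (abs_lt.mp (Real.dist_eq E E₀ ▸ Metric.mem_ball.mp hE)).1
    simp only [mul_re, re_ofNat, sub_re, ofReal_re, im_ofNat, sub_im, ofReal_im, zero_mul,
      sub_zero]
    linarith [hre t ht]
  have hslit : ∀ E ∈ Metric.ball E₀ (m / 4), ∀ t ∈ Icc (0 : ℝ) 1,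
      2 * ((E : ℂ) - W t) ∈ slitPlane := fun E hE t ht =>
    Or.inl ((half_pos hm).trans_le (hre' E hE t ht))
  have hpow : ∀ E ∈ Metric.ball E₀ (m / 4), ∀ r : ℂ,
      ContinuousOn (fun t => (2 * ((E : ℂ) - W t)) ^ r) (Icc 0 1) := fun E hE r =>
    (continuousOn_const.mul (continuousOn_const.sub hW)).cpow_const (hslit E hE)
  have hE₀ : E₀ ∈ Metric.ball E₀ (m / 4) := Metric.mem_ball_self (by positivity)
  have hIcc : ∀ t ∈ uIoc (0 : ℝ) 1, t ∈ Icc (0 : ℝ) 1 := fun t ht =>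
    Ioc_subset_Icc_self (uIoc_of_le (zero_le_one' ℝ) ▸ ht)
  have hderiv := intervalIntegral.hasDerivAt_integral_of_dominated_loc_of_deriv_le (μ := volume)
    (F := fun (E : ℝ) t => (2 * ((E : ℂ) - W t)) ^ (s : ℂ) * dZ t)
    (F' := fun (E : ℝ) t => 2 * s * (2 * ((E : ℂ) - W t)) ^ ((s : ℂ) - 1) * dZ t)
    (bound := fun t => |2 * s| * (m / 2) ^ (s - 1) * ‖dZ t‖)
    (Metric.ball_mem_nhds E₀ (by positivity : 0 < m / 4))
    (eventually_of_mem (Metric.ball_mem_nhds E₀ (by positivity : 0 < m / 4)) fun E hE =>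
      (((hpow E hE _).mul hdZ).intervalIntegrable_of_Icc zero_le_one).def'.aestronglyMeasurable)
    (((hpow E₀ hE₀ _).mul hdZ).intervalIntegrable_of_Icc zero_le_one)
    ((((continuousOn_const.mul (hpow E₀ hE₀ _)).mul hdZ).intervalIntegrable_of_Icc
      zero_le_one).def'.aestronglyMeasurable)
    (ae_of_all _ fun t ht E hE => by
      rw [norm_mul, norm_mul, show ((s : ℂ) - 1) = ((s - 1 : ℝ) : ℂ) by push_cast; ring]
      rw [show (2 * (s : ℂ)) = ((2 * s : ℝ) : ℂ) by push_cast; ring, norm_real, Real.norm_eq_abs]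
      gcongr
      exact norm_cpow_le_rpow_of_le_re (half_pos hm) (hre' E hE t (hIcc t ht)) (by linarith))
    ((continuousOn_const.mul hdZ.norm).intervalIntegrable_of_Icc zero_le_one)
    (ae_of_all _ fun t ht E hE =>
      hasDerivAt_two_mul_ofReal_sub_cpow_mul (dZ t) (hslit E hE t (hIcc t ht)))
  refine hderiv.2.congr_deriv ?_
  unfold cpowLoopIntegral
  rw [← intervalIntegral.integral_const_mul]
  congr 1; funext t; push_cast; ring

theorem hasDerivAt_im_cpowLoopIntegral {s m E₀ : ℝ} (hs : s ≤ 1) (hm : 0 < m)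
    (hW : ContinuousOn W (Icc 0 1)) (hdZ : ContinuousOn dZ (Icc 0 1))
    (hre : ∀ t ∈ Icc (0 : ℝ) 1, m ≤ 2 * (E₀ - (W t).re)) :
    HasDerivAt (fun E => (cpowLoopIntegral W dZ s E).im)
      (2 * s * (cpowLoopIntegral W dZ (s - 1) E₀).im) E₀ := by
  have h := imCLM.hasFDerivAt.comp_hasDerivAt E₀ (hasDerivAt_cpowLoopIntegral hs hm hW hdZ hre)
  rw [imCLM_apply, show (2 * (s : ℂ)) = ((2 * s : ℝ) : ℂ) by push_cast; ring,
    im_ofReal_mul] at h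
  exact h

theorem abs_im_cpowLoopIntegral_sub_le {s m E : ℝ} (hs : s ≤ 2) (hm : 0 < m)
    (hloop : ∫ t in (0 : ℝ)..1, dZ t = 0)
    (hW : ContinuousOn W (Icc 0 1)) (hdZ : ContinuousOn dZ (Icc 0 1))
    (hlen : ∫ t in (0 : ℝ)..1, ‖dZ t‖ ≤ ℓ)
    (hWρ : ∀ t ∈ Icc (0 : ℝ) 1, ‖W t - ec‖ ≤ ρ) (hE : m ≤ 2 * (E - ec) - 2 * ρ) :
    |(cpowLoopIntegral W dZ s E).im
        - 2 * s * (2 * (E - ec)) ^ (s - 1) * -(∫ t in (0 : ℝ)..1, W t * dZ t).im|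
      ≤ 4 * |s * (s - 1)| * m ^ (s - 2) * ρ ^ 2 * ℓ := by
  have hρ : 0 ≤ ρ := (norm_nonneg _).trans (hWρ 0 ⟨le_rfl, zero_le_one⟩)
  have hre : ∀ z : ℂ, ‖z - ec‖ ≤ ρ → m ≤ (2 * ((E : ℂ) - z)).re := fun z hz => by
    have := (le_abs_self _).trans ((abs_re_le_norm (z - ec)).trans hz)
    simp only [mul_re, re_ofNat, sub_re, ofReal_re, im_ofNat, sub_im, ofReal_im, zero_mul,
      sub_zero] at this ⊢
    linarith
  have hu := hre ec (by simpa using hρ)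
  have hf : ContinuousOn (fun t => (2 * ((E : ℂ) - W t)) ^ (s : ℂ)) (Icc 0 1) :=
    (continuousOn_const.mul (continuousOn_const.sub hW)).cpow_const
      fun t ht => Or.inl (hm.trans_le (hre _ (hWρ t ht)))
  have hpow : (((2 * (E - ec)) ^ (s - 1) : ℝ) : ℂ) = (2 * ((E : ℂ) - ec)) ^ ((s : ℂ) - 1) := by
    rw [ofReal_cpow (by linarith)]; push_cast; rfl
  have key := norm_integral_mul_sub_le_of_integral_eq_zero (c := (2 * ((E : ℂ) - ec)) ^ (s : ℂ))
    (g := ((-(2 * s) * (2 * (E - ec)) ^ (s - 1) : ℝ) : ℂ)) (e := ec)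
    (C := 4 * |s * (s - 1)| * m ^ (s - 2) * ρ ^ 2) hloop hf hW hdZ hlen fun t ht => by
      have h := norm_cpow_sub_sub_le_of_le_re hm hs hu (hre _ (hWρ t ht))
      have hvu : 2 * ((E : ℂ) - W t) - 2 * ((E : ℂ) - ec) = -2 * (W t - ec) := by ring
      rw [hvu, norm_mul, show ‖(-2 : ℂ)‖ = 2 by norm_num] at h
      calc _ = ‖(2 * ((E : ℂ) - W t)) ^ (s : ℂ) - (2 * ((E : ℂ) - ec)) ^ (s : ℂ)
            - s * (2 * ((E : ℂ) - ec)) ^ ((s : ℂ) - 1) * (-2 * (W t - ec))‖ := by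
            push_cast; rw [hpow]; ring_nf
        _ ≤ _ := h
        _ ≤ _ := by
          have := pow_le_pow_left₀ (norm_nonneg _) (hWρ t ht) 2
          have : 0 ≤ |s * (s - 1)| * m ^ (s - 2) := by positivity
          nlinarith
  calc _ = |((cpowLoopIntegral W dZ s E) - ((-(2 * s) * (2 * (E - ec)) ^ (s - 1) : ℝ) : ℂ)
        * ∫ t in (0 : ℝ)..1, W t * dZ t).im| := by
        rw [sub_im, im_ofReal_mul]; ring_nf
    _ ≤ _ := (abs_im_le_norm _).trans key

theorem pos_mul_im_cpowLoopIntegral {s E : ℝ} (hs : s ≤ 1) (hm₀ : 0 < m₀)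
    (hgap : ∀ E ∈ Icc E₁ E₂, m₀ ≤ E - ec) (hρ : 2 * ρ ≤ m₀)
    (hloop : ∫ t in (0 : ℝ)..1, dZ t = 0)
    (hW : ContinuousOn W (Icc 0 1)) (hdZ : ContinuousOn dZ (Icc 0 1))
    (hlen : ∫ t in (0 : ℝ)..1, ‖dZ t‖ ≤ ℓ) (hWρ : ∀ t ∈ Icc (0 : ℝ) 1, ‖W t - ec‖ ≤ ρ)
    (hγ : γ ≤ -(∫ t in (0 : ℝ)..1, W t * dZ t).im) (hγ0 : 0 ≤ γ)
    (hsmall : 4 * |s * (s - 1)| * m₀ ^ (s - 2) * ρ ^ 2 * ℓ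
      < 2 * |s| * (2 * (E₂ - ec)) ^ (s - 1) * γ)
    (hE : E ∈ Icc E₁ E₂) : 0 < s * (cpowLoopIntegral W dZ s E).im := by
  set Γ := -(∫ t in (0 : ℝ)..1, W t * dZ t).im
  have hgapE := hgap E hE
  have hlin := abs_im_cpowLoopIntegral_sub_le (s := s) (E := E) (by linarith) hm₀ hloop hW hdZ
    hlen hWρ (by linarith)
  have hs0 : 0 < |s| := abs_pos.mpr fun h => by simp [h] at hsmall
  -- the linear term dominates, since `(2 (E - ec)) ^ (s - 1)` is smallest at `E = E₂`
  have hr : (2 * (E₂ - ec)) ^ (s - 1) ≤ (2 * (E - ec)) ^ (s - 1) :=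
    Real.rpow_le_rpow_of_nonpos (by linarith) (by linarith [hE.2]) (by linarith)
  have hr₂ : 0 ≤ (2 * (E₂ - ec)) ^ (s - 1) := Real.rpow_nonneg (by linarith [hE.2]) _
  have hlin' : |s * (cpowLoopIntegral W dZ s E).im - s * (2 * s * (2 * (E - ec)) ^ (s - 1) * Γ)|
      ≤ |s| * (4 * |s * (s - 1)| * m₀ ^ (s - 2) * ρ ^ 2 * ℓ) := by
    rw [← mul_sub, abs_mul]; exact mul_le_mul_of_nonneg_left hlin (abs_nonneg s)
  have hmain : |s| * (2 * |s| * (2 * (E₂ - ec)) ^ (s - 1) * γ)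
      ≤ s * (2 * s * (2 * (E - ec)) ^ (s - 1) * Γ) := by
    calc |s| * (2 * |s| * (2 * (E₂ - ec)) ^ (s - 1) * γ)
        = 2 * (s * s) * ((2 * (E₂ - ec)) ^ (s - 1) * γ) := by rw [← abs_mul_abs_self s]; ring
      _ ≤ 2 * (s * s) * ((2 * (E - ec)) ^ (s - 1) * Γ) := by
        have := mul_self_nonneg s
        gcongr
        exact hr₂.trans hr
      _ = s * (2 * s * (2 * (E - ec)) ^ (s - 1) * Γ) := by ring
  linarith [(abs_le.mp hlin').1, mul_lt_mul_of_pos_left hsmall hs0]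

theorem im_cpowLoopIntegral_half_pos_strictAntiOn_strictConvexOn (hm₀ : 0 < m₀)
    (hgap : ∀ E ∈ Icc E₁ E₂, m₀ ≤ E - ec) (hρ : 2 * ρ ≤ m₀)
    (hloop : ∫ t in (0 : ℝ)..1, dZ t = 0)
    (hW : ContinuousOn W (Icc 0 1)) (hdZ : ContinuousOn dZ (Icc 0 1))
    (hlen : ∫ t in (0 : ℝ)..1, ‖dZ t‖ ≤ ℓ) (hWρ : ∀ t ∈ Icc (0 : ℝ) 1, ‖W t - ec‖ ≤ ρ)
    (hγ : γ ≤ -(∫ t in (0 : ℝ)..1, W t * dZ t).im) (hγ0 : 0 ≤ γ)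
    (hsmall : ∀ s ∈ ({1 / 2, -1 / 2, -3 / 2} : Finset ℝ),
      4 * |s * (s - 1)| * m₀ ^ (s - 2) * ρ ^ 2 * ℓ < 2 * |s| * (2 * (E₂ - ec)) ^ (s - 1) * γ) :
    (∀ E ∈ Icc E₁ E₂, 0 < (cpowLoopIntegral W dZ (1 / 2) E).im) ∧
    StrictAntiOn (fun E => (cpowLoopIntegral W dZ (1 / 2) E).im) (Icc E₁ E₂) ∧
    StrictConvexOn ℝ (Icc E₁ E₂) (fun E => (cpowLoopIntegral W dZ (1 / 2) E).im) := by
  have hsign : ∀ s ∈ ({1 / 2, -1 / 2, -3 / 2} : Finset ℝ), ∀ E ∈ Icc E₁ E₂,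
      0 < s * (cpowLoopIntegral W dZ s E).im := fun s hs E hE =>
    pos_mul_im_cpowLoopIntegral (by
        simp only [Finset.mem_insert, Finset.mem_singleton] at hs
        rcases hs with rfl | rfl | rfl <;> norm_num)
      hm₀ hgap hρ hloop hW hdZ hlen hWρ hγ hγ0 (hsmall s hs) hE
  have hderiv : ∀ s ≤ 1, ∀ E ∈ Icc E₁ E₂, HasDerivAt (fun E => (cpowLoopIntegral W dZ s E).im)
      (2 * s * (cpowLoopIntegral W dZ (s - 1) E).im) E := fun s hs E hE =>
    hasDerivAt_im_cpowLoopIntegral hs hm₀ hW hdZ fun t ht => by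
      have := (le_abs_self _).trans ((abs_re_le_norm (W t - ec)).trans (hWρ t ht))
      rw [sub_re, ofReal_re] at this
      linarith [hgap E hE]
  refine ⟨fun E hE => ?_, strictAntiOn_of_hasDerivAt_neg (convex_Icc E₁ E₂)
    (fun E hE => hderiv (1 / 2) (by norm_num) E hE) fun E hE => ?_,
    strictConvexOn_of_hasDerivAt2_pos (convex_Icc E₁ E₂)
    (fun E hE => hderiv (1 / 2) (by norm_num) E hE)
    (fun E hE => (hderiv (1 / 2 - 1) (by norm_num) E hE).const_mul _) fun E hE => ?_⟩
  · linarith [hsign (1 / 2) (by simp) E hE]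
  · have := hsign (-1 / 2) (by simp) E hE
    norm_num at this ⊢; linarith
  · have := hsign (-3 / 2) (by simp) E hE
    norm_num at this ⊢; linarith

end cpowLoopIntegral

theorem stmt_9_general (E₁ E₂ ec m₀ L K δ₀ : ℝ)
    (h12 : E₁ ≤ E₂) (hm₀ : 0 < m₀) (hgap : ∀ E ∈ Set.Icc E₁ E₂, m₀ ≤ E - ec)
    (hδ₀ : 0 < δ₀)
    (ζ dζ w : ℝ → ℝ → ℂ)
    (hdata : ∀ δ ∈ Set.Ioc (0 : ℝ) δ₀,
      (∀ t ∈ Set.Icc (0 : ℝ) 1,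
        HasDerivWithinAt (ζ δ) (dζ δ t) (Set.Icc (0 : ℝ) 1) t) ∧
      ContinuousOn (dζ δ) (Set.Icc (0 : ℝ) 1) ∧
      ζ δ 0 = ζ δ 1 ∧
      (∫ t in (0 : ℝ)..1, ‖dζ δ t‖) ≤ L * δ ∧
      ContinuousOn (w δ) (Set.Icc (0 : ℝ) 1) ∧
      (∀ t ∈ Set.Icc (0 : ℝ) 1, ‖w δ t - (ec : ℂ)‖ ≤ K * δ))
    (c₁ c₂ : ℝ) (hc₁ : 0 < c₁)
    (hΓ : ∀ δ ∈ Set.Ioc (0 : ℝ) δ₀,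
      c₁ * δ ^ 2 ≤ -(∫ t in (0 : ℝ)..1, w δ t * dζ δ t).im ∧
      -(∫ t in (0 : ℝ)..1, w δ t * dζ δ t).im ≤ c₂ * δ ^ 2) :
    ∃ δ₁ ∈ Set.Ioc (0 : ℝ) δ₀, ∀ δ ∈ Set.Ioc (0 : ℝ) δ₁,
      (∀ E ∈ Set.Icc E₁ E₂,
        0 < (∫ t in (0 : ℝ)..1, (2 * ((E : ℂ) - w δ t)) ^ ((1 : ℂ) / 2) * dζ δ t).im) ∧
      StrictAntiOn
        (fun E : ℝ =>
          (∫ t in (0 : ℝ)..1, (2 * ((E : ℂ) - w δ t)) ^ ((1 : ℂ) / 2) * dζ δ t).im)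
        (Set.Icc E₁ E₂) ∧
      StrictConvexOn ℝ (Set.Icc E₁ E₂)
        (fun E : ℝ =>
          (∫ t in (0 : ℝ)..1, (2 * ((E : ℂ) - w δ t)) ^ ((1 : ℂ) / 2) * dζ δ t).im) := by
  have hE₂ : 0 < 2 * (E₂ - ec) := by linarith [hgap E₂ ⟨h12, le_rfl⟩]
  have hsmall : ∀ᶠ δ in 𝓝[>] 0, K * δ < m₀ / 2 ∧ ∀ s ∈ ({1 / 2, -1 / 2, -3 / 2} : Finset ℝ),
      4 * |s * (s - 1)| * m₀ ^ (s - 2) * (K * δ) ^ 2 * (L * δ)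
        < 2 * |s| * (2 * (E₂ - ec)) ^ (s - 1) * (c₁ * δ ^ 2) := by
    refine (eventually_nhdsGT_zero_mul_lt (by positivity) K).and
      ((eventually_all_finset _).2 fun s hs => ?_)
    have hs0 : s ≠ 0 := by
      simp only [Finset.mem_insert, Finset.mem_singleton] at hs
      rcases hs with rfl | rfl | rfl <;> norm_num
    have hA : 0 < 2 * |s| * (2 * (E₂ - ec)) ^ (s - 1) * c₁ :=
      mul_pos (mul_pos (mul_pos two_pos (abs_pos.mpr hs0)) (Real.rpow_pos_of_pos hE₂ _)) hc₁
    filter_upwards [eventually_nhdsGT_zero_mul_pow_three_lt hA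
      (4 * |s * (s - 1)| * m₀ ^ (s - 2) * K ^ 2 * L)] with δ hδ
    convert hδ using 1 <;> ring
  obtain ⟨u, hu, hsub⟩ := mem_nhdsGT_iff_exists_Ioc_subset.1 hsmall
  refine ⟨min u δ₀, ⟨lt_min hu hδ₀, min_le_right _ _⟩, fun δ hδ => ?_⟩
  have hδ₀' : δ ∈ Ioc 0 δ₀ := ⟨hδ.1, hδ.2.trans (min_le_right _ _)⟩
  obtain ⟨hζ, hdζ, hcl, hlen, hw, hwb⟩ := hdata δ hδ₀'
  obtain ⟨hKδ, hs⟩ := hsub ⟨hδ.1, hδ.2.trans (min_le_left _ _)⟩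
  have hβ : ∀ E : ℝ, (∫ t in (0 : ℝ)..1, (2 * ((E : ℂ) - w δ t)) ^ ((1 : ℂ) / 2) * dζ δ t)
      = cpowLoopIntegral (w δ) (dζ δ) (1 / 2) E := fun E => by simp [cpowLoopIntegral]
  simp only [hβ]
  exact im_cpowLoopIntegral_half_pos_strictAntiOn_strictConvexOn hm₀ hgap (by linarith)
    (integral_eq_zero_of_hasDerivWithinAt_of_eq zero_le_one hζ
      (hdζ.intervalIntegrable_of_Icc zero_le_one) hcl)
    hw hdζ hlen hwb (hΓ δ hδ₀').1 (by have := hδ.1; positivity) hs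

/-- Same setting as Statement 7, and assume in addition that
`Γ₀(δ) := −Im ∫₀¹ w ζ′ dt` satisfies `c₁δ² ≤ Γ₀(δ) ≤ c₂δ²` on `(0,δ₀]`.
Then there exists `δ₁ ∈ (0,δ₀]` such that for every `δ ∈ (0,δ₁]` the function
`β(E) := Im ∫₀¹ √(2(E−w)) ζ′ dt` is positive, strictly decreasing, and strictly
convex on Δ. -/
theorem stmt_9 (E₁ E₂ ec m₀ L K δ₀ : ℝ)
    (h12 : E₁ ≤ E₂) (hm₀ : 0 < m₀) (hgap : ∀ E ∈ Set.Icc E₁ E₂, m₀ ≤ E - ec)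
    (hL : 0 < L) (hK : 0 < K) (hδ₀ : 0 < δ₀)
    (ζ dζ w : ℝ → ℝ → ℂ)
    (hdata : ∀ δ ∈ Set.Ioc (0 : ℝ) δ₀,
      (∀ t ∈ Set.Icc (0 : ℝ) 1,
        HasDerivWithinAt (ζ δ) (dζ δ t) (Set.Icc (0 : ℝ) 1) t) ∧
      ContinuousOn (dζ δ) (Set.Icc (0 : ℝ) 1) ∧
      ζ δ 0 = ζ δ 1 ∧
      (∫ t in (0 : ℝ)..1, ‖dζ δ t‖) ≤ L * δ ∧
      ContinuousOn (w δ) (Set.Icc (0 : ℝ) 1) ∧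
      (∀ t ∈ Set.Icc (0 : ℝ) 1, ‖w δ t - (ec : ℂ)‖ ≤ K * δ))
    (c₁ c₂ : ℝ) (hc₁ : 0 < c₁) (hc₁₂ : c₁ ≤ c₂)
    (hΓ : ∀ δ ∈ Set.Ioc (0 : ℝ) δ₀,
      c₁ * δ ^ 2 ≤ -(∫ t in (0 : ℝ)..1, w δ t * dζ δ t).im ∧
      -(∫ t in (0 : ℝ)..1, w δ t * dζ δ t).im ≤ c₂ * δ ^ 2) :
    ∃ δ₁ ∈ Set.Ioc (0 : ℝ) δ₀, ∀ δ ∈ Set.Ioc (0 : ℝ) δ₁,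
      (∀ E ∈ Set.Icc E₁ E₂,
        0 < (∫ t in (0 : ℝ)..1, (2 * ((E : ℂ) - w δ t)) ^ ((1 : ℂ) / 2) * dζ δ t).im) ∧
      StrictAntiOn
        (fun E : ℝ =>
          (∫ t in (0 : ℝ)..1, (2 * ((E : ℂ) - w δ t)) ^ ((1 : ℂ) / 2) * dζ δ t).im)
        (Set.Icc E₁ E₂) ∧
      StrictConvexOn ℝ (Set.Icc E₁ E₂)
        (fun E : ℝ =>
          (∫ t in (0 : ℝ)..1, (2 * ((E : ℂ) - w δ t)) ^ ((1 : ℂ) / 2) * dζ δ t).im) :=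
  stmt_9_general E₁ E₂ ec m₀ L K δ₀ h12 hm₀ hgap hδ₀ ζ dζ w hdata c₁ c₂ hc₁ hΓ
end

section
/- Let G : Δ → ℝ be C³ with G ≥ 0, G(E₀) = 0, G′(E₀) = 0, g := G″(E₀) > 0, and E₀ the unique global minimizer of G on Δ. Let d > 0, let Γ₀ : (0,d] → (0,∞) satisfy Γ₀(δ) ≤ Dδ² for some D > 0, and let r : Δ × (0,d] → ℝ be C² in E with |∂ⁿ_E r(E,δ)| ≤ Cδ³ for n = 0,1,2. Define α(E,δ) := G(E) + Γ₀(δ)/k_c(E) + r(E,δ). Then there exist δ₀ ∈ (0,d] and C′ > 0 such that for all δ ∈ (0,δ₀]: α(·,δ) has a unique global minimizer E*(δ) on Δ, E*(δ) lies in the interior of Δ, and |E*(δ) − E₀ − Γ₀(δ)/(g·k_c(E₀)³)| ≤ C′δ³, |α(E*(δ),δ) − Γ₀(δ)/k_c(E₀)| ≤ C′δ³, and |∂²_E α(E*(δ),δ) − g| ≤ C′δ². -/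
/-!
Near `E₀` the function `G` is uniformly convex, and the perturbation
`p_δ(E) = Γ₀(δ)/k_c(E) + r(E,δ)` is `O(δ²)` in `C²` because `1/k_c` is smooth on `Δ`.
Hence `α(·,δ)' = G' + p_δ'` changes sign on a fixed window around `E₀` and is strictly
increasing there, giving a unique critical point `E*`, which is the strict minimum on the
window; off the window `G` is bounded below by a positive constant, which beats `p_δ`.
From `G'(E*) + p_δ'(E*) = 0` one gets `|E* − E₀| = O(δ²)`, and Taylor expansion of `G'` and
`G` at `E₀` (with remainders controlled by `sup |G‴|`) turns this into the stated `O(δ³)`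
expansions of `E*` and `α(E*,δ)`, with `G″(E*) − g = O(δ²)`.
-/

open Set

section MeanValue

variable {K : Set ℝ} {ψ ψ' φ φ' : ℝ → ℝ} {x₀ x C M : ℝ}

theorem abs_sub_le_of_hasDerivWithinAt (hK : Convex ℝ K)
    (hψ : ∀ y ∈ K, HasDerivWithinAt ψ (ψ' y) K y) (hx₀ : x₀ ∈ K) (hx : x ∈ K)
    (hC : ∀ y ∈ K, |y - x₀| ≤ |x - x₀| → |ψ' y| ≤ C) :
    |ψ x - ψ x₀| ≤ C * |x - x₀| := by
  have hball : Convex ℝ (K ∩ Metric.closedBall x₀ |x - x₀|) :=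
    hK.inter (convex_closedBall _ _)
  simpa [Real.norm_eq_abs, Real.dist_eq] using
    hball.norm_image_sub_le_of_norm_hasDerivWithin_le
      (fun y hy => (hψ y hy.1).mono inter_subset_left)
      (fun y hy => hC y hy.1 (by simpa [Real.dist_eq] using hy.2))
      ⟨hx₀, by simp⟩ ⟨hx, by simp [Real.dist_eq]⟩

theorem abs_sub_sub_le_of_hasDerivWithinAt (hK : Convex ℝ K)
    (hψ : ∀ y ∈ K, HasDerivWithinAt ψ (ψ' y) K y) (hφ : ∀ y ∈ K, HasDerivWithinAt φ (φ' y) K y)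
    (hM : 0 ≤ M) {n : ℕ} (hb : ∀ y ∈ K, |ψ' y - φ' y| ≤ M * |y - x₀| ^ n)
    (hx₀ : x₀ ∈ K) (hx : x ∈ K) :
    |ψ x - φ x - (ψ x₀ - φ x₀)| ≤ M * |x - x₀| ^ (n + 1) := by
  have := abs_sub_le_of_hasDerivWithinAt hK (fun y hy => (hψ y hy).sub (hφ y hy)) hx₀ hx
    (C := M * |x - x₀| ^ n) fun y hy hyx => (hb y hy).trans (by gcongr)
  simpa [pow_succ, mul_assoc] using this

end MeanValue

section Taylor

variable {K : Set ℝ} {f f₁ f₂ : ℝ → ℝ} {x₀ x g M : ℝ}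

theorem abs_sub_taylor_one_le (hK : Convex ℝ K) (hx₀ : x₀ ∈ K) (hx : x ∈ K) (hM : 0 ≤ M)
    (hf₁ : ∀ y ∈ K, HasDerivWithinAt f₁ (f₂ y) K y) (hf₂ : ∀ y ∈ K, |f₂ y - g| ≤ M * |y - x₀|) :
    |f₁ x - f₁ x₀ - g * (x - x₀)| ≤ M * |x - x₀| ^ 2 := by
  have hlin : ∀ y ∈ K, HasDerivWithinAt (fun y => g * (y - x₀)) g K y := fun y _ => by
    simpa using (((hasDerivAt_id y).sub_const x₀).const_mul g).hasDerivWithinAt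
  have := abs_sub_sub_le_of_hasDerivWithinAt hK hf₁ hlin hM (n := 1) (by simpa using hf₂) hx₀ hx
  rwa [sub_self, mul_zero, sub_zero, sub_right_comm] at this

theorem abs_sub_taylor_two_le (hK : Convex ℝ K) (hx₀ : x₀ ∈ K) (hx : x ∈ K) (hM : 0 ≤ M)
    (hf : ∀ y ∈ K, HasDerivWithinAt f (f₁ y) K y) (hf₁ : ∀ y ∈ K, HasDerivWithinAt f₁ (f₂ y) K y)
    (hf₂ : ∀ y ∈ K, |f₂ y - g| ≤ M * |y - x₀|) :
    |f x - f x₀ - f₁ x₀ * (x - x₀) - g / 2 * (x - x₀) ^ 2| ≤ M * |x - x₀| ^ 3 := by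
  have hquad : ∀ y ∈ K, HasDerivWithinAt (fun y => f₁ x₀ * (y - x₀) + g / 2 * (y - x₀) ^ 2)
      (f₁ x₀ + g * (y - x₀)) K y := fun y _ => by
    have h₁ : HasDerivAt (fun y => y - x₀) 1 y := (hasDerivAt_id' y).sub_const x₀
    exact (((h₁.const_mul (f₁ x₀)).fun_add ((h₁.fun_pow 2).const_mul (g / 2))).congr_deriv
      (by push_cast; ring)).hasDerivWithinAt
  have := abs_sub_sub_le_of_hasDerivWithinAt hK hf hquad hM (n := 2)
    (fun y hy => by simpa [sub_sub] using abs_sub_taylor_one_le hK hx₀ hy hM hf₁ hf₂) hx₀ hx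
  convert this using 2
  ring

end Taylor

theorem ContDiffOn.hasDerivWithinAt_iteratedDerivWithin {f : ℝ → ℝ} {s : Set ℝ} {n k : ℕ}
    (hf : ContDiffOn ℝ n f s) (hs : UniqueDiffOn ℝ s) (hk : k < n) {x : ℝ} (hx : x ∈ s) :
    HasDerivWithinAt (iteratedDerivWithin k f s) (iteratedDerivWithin (k + 1) f s x) s x := by
  rw [iteratedDerivWithin_succ]
  exact (hf.differentiableOn_iteratedDerivWithin (by exact_mod_cast hk) hs x hx).hasDerivWithinAt

theorem ContDiffOn.exists_abs_iteratedDerivWithin_le {f : ℝ → ℝ} {s : Set ℝ} {n : ℕ}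
    (hf : ContDiffOn ℝ n f s) (hs : UniqueDiffOn ℝ s) (hsc : IsCompact s) :
    ∃ B, ∀ x ∈ s, ∀ k ≤ n, |iteratedDerivWithin k f s x| ≤ B := by
  have hcont :
      ContinuousOn (fun x => ∑ k ∈ Finset.range (n + 1), |iteratedDerivWithin k f s x|) s :=
    continuousOn_finsetSum _ fun k hk => (hf.continuousOn_iteratedDerivWithin
      (by exact_mod_cast Finset.mem_range_succ_iff.1 hk) hs).abs
  obtain ⟨B, hB⟩ := hsc.exists_bound_of_continuousOn hcont
  refine ⟨B, fun x hx k hk => le_trans ?_ ((le_abs_self _).trans (hB x hx))⟩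
  exact Finset.single_le_sum (f := fun k => |iteratedDerivWithin k f s x|)
    (fun _ _ => abs_nonneg _) (Finset.mem_range_succ_iff.2 hk)

theorem iteratedDerivWithin_const_mul_add {s : Set ℝ} (hs : UniqueDiffOn ℝ s) {ψ r : ℝ → ℝ}
    {n : ℕ} (hψ : ContDiffOn ℝ n ψ s) (hr : ContDiffOn ℝ n r s) (c : ℝ) {x : ℝ} (hx : x ∈ s)
    {k : ℕ} (hk : k ≤ n) :
    iteratedDerivWithin k (fun y => c * ψ y + r y) s x =
      c * iteratedDerivWithin k ψ s x + iteratedDerivWithin k r s x := by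
  have hk' : (k : WithTop ℕ∞) ≤ n := by exact_mod_cast hk
  rw [iteratedDerivWithin_fun_add hx hs ((contDiffOn_const.mul hψ).of_le hk' x hx)
    (hr.of_le hk' x hx), iteratedDerivWithin_const_mul_field]

theorem Metric.exists_pos_add_le_of_strictMin {X : Type*} [MetricSpace X] {K : Set X}
    (hK : IsCompact K) {f : X → ℝ} (hf : ContinuousOn f K) {x₀ : X}
    (hmin : ∀ x ∈ K, x ≠ x₀ → f x₀ < f x) {η : ℝ} (hη : 0 < η) :
    ∃ μ > 0, ∀ x ∈ K, η ≤ dist x x₀ → f x₀ + μ ≤ f x := by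
  set S := K \ Metric.ball x₀ η
  have hS_mem : ∀ x ∈ K, η ≤ dist x x₀ → x ∈ S := fun x hx h =>
    ⟨hx, by simpa [Metric.mem_ball] using h⟩
  rcases S.eq_empty_or_nonempty with hS | hS
  · exact ⟨1, one_pos, fun x hx hxη => by simpa [hS] using hS_mem x hx hxη⟩
  obtain ⟨xm, ⟨hxmK, hxmη⟩, hxm⟩ :=
    (hK.diff Metric.isOpen_ball).exists_isMinOn hS (hf.mono sdiff_subset)
  have hne : xm ≠ x₀ := by
    rintro rfl
    exact hxmη (Metric.mem_ball_self hη)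
  refine ⟨f xm - f x₀, sub_pos.2 (hmin xm hxmK hne), fun x hx hxη => ?_⟩
  linarith [isMinOn_iff.1 hxm x (hS_mem x hx hxη)]

theorem exists_strictMinOn_of_deriv_neg_pos {c e : ℝ} {φ φ₁ φ₂ : ℝ → ℝ} (hce : c ≤ e)
    (hφ : ∀ x ∈ Icc c e, HasDerivWithinAt φ (φ₁ x) (Icc c e) x)
    (hφ₁ : ∀ x ∈ Icc c e, HasDerivWithinAt φ₁ (φ₂ x) (Icc c e) x)
    (hφ₂ : ∀ x ∈ Icc c e, 0 < φ₂ x) (hc : φ₁ c < 0) (he : 0 < φ₁ e) :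
    ∃ xs ∈ Ioo c e, φ₁ xs = 0 ∧ ∀ x ∈ Icc c e, x ≠ xs → φ xs < φ x := by
  have hcont₁ : ContinuousOn φ₁ (Icc c e) := fun x hx => (hφ₁ x hx).continuousWithinAt
  have hcont : ContinuousOn φ (Icc c e) := fun x hx => (hφ x hx).continuousWithinAt
  have hmono : StrictMonoOn φ₁ (Icc c e) :=
    strictMonoOn_of_hasDerivWithinAt_pos (convex_Icc c e) hcont₁
      (fun x hx => (hφ₁ x (interior_subset hx)).mono interior_subset)
      (fun x hx => hφ₂ x (interior_subset hx))
  obtain ⟨xs, hxs, hxs0⟩ := intermediate_value_Ioo hce hcont₁ ⟨hc, he⟩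
  have hxsI : xs ∈ Icc c e := Ioo_subset_Icc_self hxs
  have hderiv : ∀ {u v : ℝ}, Icc u v ⊆ Icc c e → ∀ y ∈ interior (Icc u v),
      HasDerivWithinAt φ (φ₁ y) (interior (Icc u v)) y := fun h y hy =>
    (hφ y (h (interior_subset hy))).mono (interior_subset.trans h)
  refine ⟨xs, hxs, hxs0, fun x hx hne => ?_⟩
  rcases hne.lt_or_gt with hlt | hgt
  · have hsub : Icc x xs ⊆ Icc c e := Icc_subset_Icc hx.1 hxs.2.le
    refine strictAntiOn_of_hasDerivWithinAt_neg (convex_Icc x xs) (hcont.mono hsub)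
      (hderiv hsub) (fun y hy => ?_) ⟨le_rfl, hlt.le⟩ ⟨hlt.le, le_rfl⟩ hlt
    rw [interior_Icc] at hy
    exact hxs0 ▸ hmono (hsub (Ioo_subset_Icc_self hy)) hxsI hy.2
  · have hsub : Icc xs x ⊆ Icc c e := Icc_subset_Icc hxs.1.le hx.2
    refine strictMonoOn_of_hasDerivWithinAt_pos (convex_Icc xs x) (hcont.mono hsub)
      (hderiv hsub) (fun y hy => ?_) ⟨le_rfl, hgt.le⟩ ⟨hgt.le, le_rfl⟩ hgt
    rw [interior_Icc] at hy
    exact hxs0 ▸ hmono hxsI (hsub (Ioo_subset_Icc_self hy)) hy.1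

theorem exists_pos_window {a b x₀ M c : ℝ} (hx₀ : x₀ ∈ Ioo a b) (hM : 0 ≤ M) (hc : 0 < c) :
    ∃ η > 0, a ≤ x₀ - η ∧ x₀ + η ≤ b ∧ M * η ≤ c := by
  set η := min (min (x₀ - a) (b - x₀)) (c / (M + 1))
  have hηa : η ≤ x₀ - a := (min_le_left _ _).trans (min_le_left _ _)
  have hηb : η ≤ b - x₀ := (min_le_left _ _).trans (min_le_right _ _)
  refine ⟨η, lt_min (lt_min (by linarith [hx₀.1]) (by linarith [hx₀.2])) (by positivity),
    by linarith, by linarith, ?_⟩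
  calc M * η ≤ M * (c / (M + 1)) := by gcongr; exact min_le_right _ _
    _ ≤ c := by
      rw [mul_div_assoc', div_le_iff₀ (by positivity)]
      nlinarith

theorem exists_strictMinOn_window {x₀ η g ε : ℝ} {φ φ₁ φ₂ : ℝ → ℝ} (hη : 0 < η) (hg : 0 < g)
    (hφ : ∀ x ∈ Icc (x₀ - η) (x₀ + η), HasDerivWithinAt φ (φ₁ x) (Icc (x₀ - η) (x₀ + η)) x)
    (hφ₁ : ∀ x ∈ Icc (x₀ - η) (x₀ + η), HasDerivWithinAt φ₁ (φ₂ x) (Icc (x₀ - η) (x₀ + η)) x)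
    (hφ₂ : ∀ x ∈ Icc (x₀ - η) (x₀ + η), 0 < φ₂ x)
    (hφ₁_lin : ∀ x ∈ Icc (x₀ - η) (x₀ + η), |φ₁ x - g * (x - x₀)| ≤ g / 4 * |x - x₀| + ε)
    (hε : ε < 3 * g * η / 4) :
    ∃ xs ∈ Ioo (x₀ - η) (x₀ + η), φ₁ xs = 0 ∧
      (∀ x ∈ Icc (x₀ - η) (x₀ + η), x ≠ xs → φ xs < φ x) ∧ 3 * g * |xs - x₀| ≤ 4 * ε := by
  have hleft := abs_le.1 (hφ₁_lin (x₀ - η) ⟨le_rfl, by linarith⟩)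
  have hright := abs_le.1 (hφ₁_lin (x₀ + η) ⟨by linarith, le_rfl⟩)
  rw [show x₀ - η - x₀ = -η by ring, abs_neg, abs_of_pos hη] at hleft
  rw [show x₀ + η - x₀ = η by ring, abs_of_pos hη] at hright
  obtain ⟨xs, hxs, hcrit, hmin⟩ := exists_strictMinOn_of_deriv_neg_pos (by linarith) hφ hφ₁ hφ₂
    (by linarith) (by linarith)
  refine ⟨xs, hxs, hcrit, hmin, ?_⟩
  have hlin := hφ₁_lin xs (Ioo_subset_Icc_self hxs)
  rw [hcrit, zero_sub, abs_neg, abs_mul, abs_of_pos hg] at hlin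
  linarith

theorem exists_strictMinOn_of_small_perturbation {a b x₀ g M : ℝ} {f f₁ f₂ : ℝ → ℝ}
    (hx₀ : x₀ ∈ Ioo a b) (hg : 0 < g) (hM : 0 ≤ M)
    (hf : ∀ x ∈ Icc a b, HasDerivWithinAt f (f₁ x) (Icc a b) x)
    (hf₁ : ∀ x ∈ Icc a b, HasDerivWithinAt f₁ (f₂ x) (Icc a b) x)
    (hf₁x₀ : f₁ x₀ = 0) (hf₂ : ∀ x ∈ Icc a b, |f₂ x - g| ≤ M * |x - x₀|)
    (hmin : ∀ x ∈ Icc a b, x ≠ x₀ → f x₀ < f x) :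
    ∃ ε > 0, ∀ ε' ≤ ε, ∀ p p₁ p₂ : ℝ → ℝ,
      (∀ x ∈ Icc a b, HasDerivWithinAt p (p₁ x) (Icc a b) x) →
      (∀ x ∈ Icc a b, HasDerivWithinAt p₁ (p₂ x) (Icc a b) x) →
      (∀ x ∈ Icc a b, |p x| ≤ ε' ∧ |p₁ x| ≤ ε' ∧ |p₂ x| ≤ ε') →
      ∃ xs ∈ Ioo a b, (∀ x ∈ Icc a b, x ≠ xs → f xs + p xs < f x + p x) ∧
        f₁ xs + p₁ xs = 0 ∧ g * |xs - x₀| ≤ 2 * ε' := by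
  have hx₀K : x₀ ∈ Icc a b := Ioo_subset_Icc_self hx₀
  obtain ⟨η, hη, hηa, hηb, hMη⟩ := exists_pos_window hx₀ hM (by positivity : 0 < g / 4)
  have hW : Icc (x₀ - η) (x₀ + η) ⊆ Icc a b := Icc_subset_Icc hηa hηb
  have hnear : ∀ x ∈ Icc (x₀ - η) (x₀ + η), M * |x - x₀| ≤ g / 4 := fun x hx =>
    (mul_le_mul_of_nonneg_left (abs_le.2 ⟨by linarith [hx.1], by linarith [hx.2]⟩) hM).trans hMη
  obtain ⟨μ, hμ, hgap⟩ := Metric.exists_pos_add_le_of_strictMin isCompact_Icc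
    (fun x hx => (hf x hx).continuousWithinAt) hmin hη
  -- `ε' ≤ g / 4` keeps `(f + p)''` positive on the window, `ε' ≤ g η / 4` makes `(f + p)'`
  -- change sign across it, and `ε' ≤ μ / 3` keeps the minimum inside it.
  refine ⟨min (g / 4) (min (g * η / 4) (μ / 3)), by positivity,
    fun ε' hε' p p₁ p₂ hp hp₁ hpb => ?_⟩
  have hε'g : ε' ≤ g / 4 := hε'.trans (min_le_left _ _)
  have hε'η : ε' ≤ g * η / 4 := hε'.trans ((min_le_right _ _).trans (min_le_left _ _))
  have hε'μ : ε' ≤ μ / 3 := hε'.trans ((min_le_right _ _).trans (min_le_right _ _))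
  have hφ₂ : ∀ x ∈ Icc (x₀ - η) (x₀ + η), 0 < f₂ x + p₂ x := fun x hx => by
    linarith [(abs_le.1 ((hf₂ x (hW hx)).trans (hnear x hx))).1, (abs_le.1 (hpb x (hW hx)).2.2).1]
  have hφ₁_lin : ∀ x ∈ Icc (x₀ - η) (x₀ + η),
      |f₁ x + p₁ x - g * (x - x₀)| ≤ g / 4 * |x - x₀| + ε' := fun x hx => by
    have hf₁x := abs_sub_taylor_one_le (convex_Icc a b) hx₀K (hW hx) hM hf₁ hf₂
    rw [hf₁x₀, sub_zero, sq, ← mul_assoc] at hf₁x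
    calc |f₁ x + p₁ x - g * (x - x₀)| ≤ |f₁ x - g * (x - x₀)| + |p₁ x| := by
          rw [add_sub_right_comm]; exact abs_add_le _ _
      _ ≤ g / 4 * |x - x₀| + ε' := add_le_add
          (hf₁x.trans (mul_le_mul_of_nonneg_right (hnear x hx) (abs_nonneg _)))
          (hpb x (hW hx)).2.1
  obtain ⟨xs, hxs, hcrit, hloc, hdist⟩ := exists_strictMinOn_window hη hg
    (fun x hx => ((hf x (hW hx)).add (hp x (hW hx))).mono hW)
    (fun x hx => ((hf₁ x (hW hx)).add (hp₁ x (hW hx))).mono hW) hφ₂ hφ₁_lin (by nlinarith)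
  refine ⟨xs, ⟨by linarith [hxs.1], by linarith [hxs.2]⟩, fun x hx hne => ?_, hcrit,
    by linarith [abs_nonneg (p x₀), (hpb x₀ hx₀K).1]⟩
  rcases lt_or_ge |x - x₀| η with hx_near | hx_far
  · obtain ⟨h₁, h₂⟩ := abs_le.1 hx_near.le
    exact hloc x ⟨by linarith, by linarith⟩ hne
  · have hle : f xs + p xs ≤ f x₀ + p x₀ := by
      rcases eq_or_ne x₀ xs with h | h
      · rw [h]
      · exact (hloc x₀ ⟨by linarith, by linarith⟩ h).le
    have := hgap x hx (by rwa [Real.dist_eq])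
    linarith [(abs_le.1 (hpb x hx).1).1, (abs_le.1 (hpb x₀ hx₀K).1).2]

section CriticalPoint

variable {K : Set ℝ} {f f₁ f₂ p p₁ p₂ : ℝ → ℝ} {x₀ xs g M ε : ℝ}

theorem abs_mul_sub_add_le_of_critical (hK : Convex ℝ K) (hx₀ : x₀ ∈ K) (hxs : xs ∈ K)
    (hM : 0 ≤ M) (hf₁ : ∀ y ∈ K, HasDerivWithinAt f₁ (f₂ y) K y)
    (hp₁ : ∀ y ∈ K, HasDerivWithinAt p₁ (p₂ y) K y) (hf₁x₀ : f₁ x₀ = 0)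
    (hf₂ : ∀ y ∈ K, |f₂ y - g| ≤ M * |y - x₀|) (hp₂ : ∀ y ∈ K, |p₂ y| ≤ ε)
    (hcrit : f₁ xs + p₁ xs = 0) :
    |g * (xs - x₀) + p₁ x₀| ≤ (M * |xs - x₀| + ε) * |xs - x₀| := by
  have hf := abs_sub_taylor_one_le hK hx₀ hxs hM hf₁ hf₂
  have hp := abs_sub_le_of_hasDerivWithinAt hK hp₁ hx₀ hxs fun y hy _ => hp₂ y hy
  calc |g * (xs - x₀) + p₁ x₀| = |(f₁ xs - f₁ x₀ - g * (xs - x₀)) + (p₁ xs - p₁ x₀)| := by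
        rw [← abs_neg]
        congr 1
        linear_combination hf₁x₀ - hcrit
    _ ≤ M * |xs - x₀| ^ 2 + ε * |xs - x₀| := (abs_add_le _ _).trans (add_le_add hf hp)
    _ = (M * |xs - x₀| + ε) * |xs - x₀| := by ring

theorem abs_add_sub_add_le (hK : Convex ℝ K) (hx₀ : x₀ ∈ K) (hxs : xs ∈ K) (hM : 0 ≤ M)
    (hf : ∀ y ∈ K, HasDerivWithinAt f (f₁ y) K y) (hf₁ : ∀ y ∈ K, HasDerivWithinAt f₁ (f₂ y) K y)
    (hp : ∀ y ∈ K, HasDerivWithinAt p (p₁ y) K y) (hf₁x₀ : f₁ x₀ = 0)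
    (hf₂ : ∀ y ∈ K, |f₂ y - g| ≤ M * |y - x₀|) (hp₁ : ∀ y ∈ K, |p₁ y| ≤ ε) :
    |f xs + p xs - (f x₀ + p x₀)| ≤
      (|g| / 2 + M * |xs - x₀|) * |xs - x₀| ^ 2 + ε * |xs - x₀| := by
  have hf := abs_sub_taylor_two_le hK hx₀ hxs hM hf hf₁ hf₂
  have hp := abs_sub_le_of_hasDerivWithinAt hK hp hx₀ hxs fun y hy _ => hp₁ y hy
  have hquad : |g / 2 * (xs - x₀) ^ 2| = |g| / 2 * |xs - x₀| ^ 2 := by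
    rw [abs_mul, abs_div, abs_two, abs_pow]
  rw [hf₁x₀, zero_mul, sub_zero] at hf
  calc |f xs + p xs - (f x₀ + p x₀)|
      = |(f xs - f x₀ - g / 2 * (xs - x₀) ^ 2) + g / 2 * (xs - x₀) ^ 2 + (p xs - p x₀)| := by
        ring_nf
    _ ≤ M * |xs - x₀| ^ 3 + |g| / 2 * |xs - x₀| ^ 2 + ε * |xs - x₀| :=
        (abs_add_three _ _ _).trans (add_le_add_three hf hquad.le hp)
    _ = (|g| / 2 + M * |xs - x₀|) * |xs - x₀| ^ 2 + ε * |xs - x₀| := by ring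

end CriticalPoint

theorem exists_pos_ge_of_three (x y z : ℝ) : ∃ A > 0, x ≤ A ∧ y ≤ A ∧ z ≤ A :=
  ⟨|x| + |y| + |z| + 1, by positivity,
    by linarith [le_abs_self x, abs_nonneg y, abs_nonneg z],
    by linarith [abs_nonneg x, le_abs_self y, abs_nonneg z],
    by linarith [abs_nonneg x, abs_nonneg y, le_abs_self z]⟩

theorem exists_strictMinOn_add_of_contDiffOn {a b x₀ g : ℝ} {f : ℝ → ℝ} (hx₀ : x₀ ∈ Ioo a b)
    (hf : ContDiffOn ℝ 3 f (Icc a b)) (hf₁ : derivWithin f (Icc a b) x₀ = 0)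
    (hg : iteratedDerivWithin 2 f (Icc a b) x₀ = g) (hgpos : 0 < g)
    (hmin : ∀ x ∈ Icc a b, x ≠ x₀ → f x₀ < f x) :
    ∃ A > 0, ∃ ε > 0, ∀ ε' ≤ ε, ∀ p : ℝ → ℝ, ContDiffOn ℝ 2 p (Icc a b) →
      (∀ x ∈ Icc a b, ∀ n ≤ 2, |iteratedDerivWithin n p (Icc a b) x| ≤ ε') →
      ∃ xs ∈ Ioo a b, (∀ x ∈ Icc a b, x ≠ xs → f xs + p xs < f x + p x) ∧
        |g * (xs - x₀) + derivWithin p (Icc a b) x₀| ≤ A * ε' ^ 2 ∧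
        |f xs + p xs - (f x₀ + p x₀)| ≤ A * ε' ^ 2 ∧
        |iteratedDerivWithin 2 (fun x => f x + p x) (Icc a b) xs - g| ≤ A * ε' := by
  have hK : UniqueDiffOn ℝ (Icc a b) := uniqueDiffOn_Icc (hx₀.1.trans hx₀.2)
  have hx₀K : x₀ ∈ Icc a b := Ioo_subset_Icc_self hx₀
  obtain ⟨M, hM⟩ := hf.exists_abs_iteratedDerivWithin_le hK isCompact_Icc
  have hM0 : 0 ≤ M := (abs_nonneg _).trans (hM x₀ hx₀K 0 (by norm_num))
  have hfd : ∀ k < 3, ∀ x ∈ Icc a b, HasDerivWithinAt (iteratedDerivWithin k f (Icc a b))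
      (iteratedDerivWithin (k + 1) f (Icc a b) x) (Icc a b) x := fun k hk x hx =>
    hf.hasDerivWithinAt_iteratedDerivWithin hK (by exact_mod_cast hk) hx
  have hf₀ : ∀ x ∈ Icc a b,
      HasDerivWithinAt f (iteratedDerivWithin 1 f (Icc a b) x) (Icc a b) x := by
    simpa only [iteratedDerivWithin_zero] using hfd 0 (by norm_num)
  have hf₁x₀ : iteratedDerivWithin 1 f (Icc a b) x₀ = 0 := by rwa [iteratedDerivWithin_one]
  have hf₂ : ∀ x ∈ Icc a b, |iteratedDerivWithin 2 f (Icc a b) x - g| ≤ M * |x - x₀| :=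
    fun x hx => hg ▸ abs_sub_le_of_hasDerivWithinAt (convex_Icc a b) (hfd 2 (by norm_num)) hx₀K
      hx fun y hy _ => hM y hy 3 le_rfl
  obtain ⟨ε, hε, hpert⟩ := exists_strictMinOn_of_small_perturbation hx₀ hgpos hM0 hf₀
    (hfd 1 (by norm_num)) hf₁x₀ hf₂ hmin
  set L := 2 / g
  obtain ⟨A, hA, hA₁, hA₂, hA₃⟩ := exists_pos_ge_of_three ((M * L + 1) * L)
    ((g / 2 + M * L * ε) * L ^ 2 + L) (M * L + 1)
  refine ⟨A, hA, ε, hε, fun ε' hε' p hp hpb => ?_⟩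
  have hpd : ∀ k < 2, ∀ x ∈ Icc a b, HasDerivWithinAt (iteratedDerivWithin k p (Icc a b))
      (iteratedDerivWithin (k + 1) p (Icc a b) x) (Icc a b) x := fun k hk x hx =>
    hp.hasDerivWithinAt_iteratedDerivWithin hK (by exact_mod_cast hk) hx
  have hp₀ : ∀ x ∈ Icc a b,
      HasDerivWithinAt p (iteratedDerivWithin 1 p (Icc a b) x) (Icc a b) x := by
    simpa only [iteratedDerivWithin_zero] using hpd 0 (by norm_num)
  have hε'0 : 0 ≤ ε' := (abs_nonneg _).trans (hpb x₀ hx₀K 0 (by norm_num))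
  obtain ⟨xs, hxs, hxs_min, hcrit, hdist⟩ := hpert ε' hε' p _ _ hp₀ (hpd 1 (by norm_num))
    fun x hx => ⟨by simpa using hpb x hx 0 (by norm_num), hpb x hx 1 (by norm_num),
      hpb x hx 2 le_rfl⟩
  have hxsK : xs ∈ Icc a b := Ioo_subset_Icc_self hxs
  have hu : |xs - x₀| ≤ L * ε' := by rw [div_mul_eq_mul_div, le_div_iff₀ hgpos]; linarith
  refine ⟨xs, hxs, hxs_min, ?_, ?_, ?_⟩
  · rw [← iteratedDerivWithin_one]
    calc _ ≤ (M * |xs - x₀| + ε') * |xs - x₀| :=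
          abs_mul_sub_add_le_of_critical (convex_Icc a b) hx₀K hxsK hM0 (hfd 1 (by norm_num))
            (hpd 1 (by norm_num)) hf₁x₀ hf₂ (fun y hy => hpb y hy 2 le_rfl) hcrit
      _ ≤ (M * (L * ε') + ε') * (L * ε') := by gcongr
      _ = (M * L + 1) * L * ε' ^ 2 := by ring
      _ ≤ A * ε' ^ 2 := by gcongr
  · calc _ ≤ (|g| / 2 + M * |xs - x₀|) * |xs - x₀| ^ 2 + ε' * |xs - x₀| :=
          abs_add_sub_add_le (convex_Icc a b) hx₀K hxsK hM0 hf₀ (hfd 1 (by norm_num)) hp₀ hf₁x₀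
            hf₂ fun y hy => hpb y hy 1 (by norm_num)
      _ ≤ (g / 2 + M * (L * ε)) * (L * ε') ^ 2 + ε' * (L * ε') := by
          rw [abs_of_pos hgpos]
          gcongr
          exact hu.trans (by gcongr)
      _ = ((g / 2 + M * L * ε) * L ^ 2 + L) * ε' ^ 2 := by ring
      _ ≤ A * ε' ^ 2 := by gcongr
  · rw [iteratedDerivWithin_fun_add hxsK hK (hf.of_le (by norm_num) xs hxsK) (hp xs hxsK),
      add_sub_right_comm]
    calc _ ≤ M * |xs - x₀| + ε' :=
          (abs_add_le _ _).trans (add_le_add (hf₂ xs hxsK) (hpb xs hxsK 2 le_rfl))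
      _ ≤ M * (L * ε') + ε' := by gcongr
      _ = (M * L + 1) * ε' := by ring
      _ ≤ A * ε' := by gcongr

theorem exists_pos_le_one_mul_sq_le {P ε : ℝ} (hP : 0 ≤ P) (hε : 0 < ε) :
    ∃ δ₀ > 0, δ₀ ≤ 1 ∧ P * δ₀ ^ 2 ≤ ε := by
  refine ⟨min 1 √(ε / (P + 1)), lt_min one_pos (Real.sqrt_pos.2 (by positivity)),
    min_le_left _ _, ?_⟩
  calc P * min 1 √(ε / (P + 1)) ^ 2 ≤ (P + 1) * √(ε / (P + 1)) ^ 2 := by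
        gcongr
        · linarith
        · exact min_le_right _ _
    _ = ε := by rw [Real.sq_sqrt (by positivity)]; field_simp

theorem exists_strictMinOn_add_const_mul_add {a b x₀ g D R : ℝ} {f ψ : ℝ → ℝ}
    (hx₀ : x₀ ∈ Ioo a b) (hf : ContDiffOn ℝ 3 f (Icc a b))
    (hf₁ : derivWithin f (Icc a b) x₀ = 0) (hg : iteratedDerivWithin 2 f (Icc a b) x₀ = g)
    (hgpos : 0 < g) (hmin : ∀ x ∈ Icc a b, x ≠ x₀ → f x₀ < f x)
    (hψ : ContDiffOn ℝ 2 ψ (Icc a b)) (hD : 0 ≤ D) (hR : 0 ≤ R) :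
    ∃ δ₀ > 0, ∃ C > 0, ∀ δ ∈ Ioc 0 δ₀, ∀ (c : ℝ) (r : ℝ → ℝ), |c| ≤ D * δ ^ 2 →
      ContDiffOn ℝ 2 r (Icc a b) →
      (∀ x ∈ Icc a b, ∀ n ≤ 2, |iteratedDerivWithin n r (Icc a b) x| ≤ R * δ ^ 3) →
      ∃ xs ∈ Ioo a b,
        (∀ x ∈ Icc a b, x ≠ xs → f xs + c * ψ xs + r xs < f x + c * ψ x + r x) ∧
        |xs - x₀ + c * derivWithin ψ (Icc a b) x₀ / g| ≤ C * δ ^ 3 ∧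
        |f xs + c * ψ xs + r xs - (f x₀ + c * ψ x₀)| ≤ C * δ ^ 3 ∧
        |iteratedDerivWithin 2 (fun x => f x + c * ψ x + r x) (Icc a b) xs - g| ≤ C * δ ^ 2 := by
  have hK : UniqueDiffOn ℝ (Icc a b) := uniqueDiffOn_Icc (hx₀.1.trans hx₀.2)
  have hx₀K : x₀ ∈ Icc a b := Ioo_subset_Icc_self hx₀
  obtain ⟨A, hA, ε, hε, hpert⟩ := exists_strictMinOn_add_of_contDiffOn hx₀ hf hf₁ hg hgpos hmin
  obtain ⟨B, hB⟩ := hψ.exists_abs_iteratedDerivWithin_le hK isCompact_Icc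
  obtain ⟨P, hP, hPdef⟩ : ∃ P ≥ 0, P = D * B + R :=
    ⟨_, add_nonneg (mul_nonneg hD ((abs_nonneg _).trans (hB x₀ hx₀K 0 (by norm_num)))) hR, rfl⟩
  obtain ⟨δ₀, hδ₀, hδ₀1, hδ₀ε⟩ := exists_pos_le_one_mul_sq_le hP hε
  obtain ⟨C, hC, hC₁, hC₂, hC₃⟩ := exists_pos_ge_of_three ((A * P ^ 2 + R) / g) (A * P ^ 2 + R)
    (A * P)
  refine ⟨δ₀, hδ₀, C, hC, fun δ ⟨hδ0, hδδ₀⟩ c r hc hr hrb => ?_⟩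
  have hδ1 : δ ≤ 1 := hδδ₀.trans hδ₀1
  set p := fun x => c * ψ x + r x with hp_def
  have hpk : ∀ x ∈ Icc a b, ∀ n ≤ 2, iteratedDerivWithin n p (Icc a b) x =
      c * iteratedDerivWithin n ψ (Icc a b) x + iteratedDerivWithin n r (Icc a b) x :=
    fun x hx n hn => iteratedDerivWithin_const_mul_add hK hψ hr c hx hn
  have hpb : ∀ x ∈ Icc a b, ∀ n ≤ 2, |iteratedDerivWithin n p (Icc a b) x| ≤ P * δ ^ 2 := by
    intro x hx n hn
    calc _ ≤ |c| * |iteratedDerivWithin n ψ (Icc a b) x| + |iteratedDerivWithin n r (Icc a b) x| :=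
          (hpk x hx n hn ▸ abs_add_le _ _).trans_eq (by rw [abs_mul])
      _ ≤ D * δ ^ 2 * B + R * δ ^ 2 := by
          gcongr
          · exact hB x hx n hn
          · exact (hrb x hx n hn).trans
              (mul_le_mul_of_nonneg_left (pow_le_pow_of_le_one hδ0.le hδ1 (by norm_num)) hR)
      _ = P * δ ^ 2 := by rw [hPdef]; ring
  obtain ⟨xs, hxs, hxs_min, h₁, h₂, h₃⟩ := hpert (P * δ ^ 2)
    ((mul_le_mul_of_nonneg_left (pow_le_pow_left₀ hδ0.le hδδ₀ 2) hP).trans hδ₀ε) p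
    ((contDiffOn_const.mul hψ).add hr) hpb
  have hδ4 : A * (P * δ ^ 2) ^ 2 + R * δ ^ 3 ≤ (A * P ^ 2 + R) * δ ^ 3 := by
    have : δ ^ 4 ≤ δ ^ 3 := pow_le_pow_of_le_one hδ0.le hδ1 (by norm_num)
    calc _ = A * P ^ 2 * δ ^ 4 + R * δ ^ 3 := by ring
      _ ≤ A * P ^ 2 * δ ^ 3 + R * δ ^ 3 := by gcongr
      _ = (A * P ^ 2 + R) * δ ^ 3 := by ring
  have hr₀ : |r x₀| ≤ R * δ ^ 3 := by simpa using hrb x₀ hx₀K 0 (by norm_num)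
  have hr₁ : |derivWithin r (Icc a b) x₀| ≤ R * δ ^ 3 := by
    simpa only [iteratedDerivWithin_one] using hrb x₀ hx₀K 1 (by norm_num)
  have hp₁ : derivWithin p (Icc a b) x₀ =
      c * derivWithin ψ (Icc a b) x₀ + derivWithin r (Icc a b) x₀ := by
    simpa only [iteratedDerivWithin_one] using hpk x₀ hx₀K 1 (by norm_num)
  refine ⟨xs, hxs, by simpa only [hp_def, add_assoc] using hxs_min, ?_, ?_, ?_⟩
  · rw [show xs - x₀ + c * derivWithin ψ (Icc a b) x₀ / g =
        (g * (xs - x₀) + derivWithin p (Icc a b) x₀ - derivWithin r (Icc a b) x₀) / g by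
      rw [hp₁]; field_simp; ring, abs_div, abs_of_pos hgpos, div_le_iff₀ hgpos]
    calc _ ≤ (A * P ^ 2 + R) * δ ^ 3 := ((abs_sub _ _).trans (add_le_add h₁ hr₁)).trans hδ4
      _ ≤ C * g * δ ^ 3 := by gcongr; exact (div_le_iff₀ hgpos).1 hC₁
      _ = C * δ ^ 3 * g := by ring
  · calc _ = |(f xs + p xs - (f x₀ + p x₀)) + r x₀| := by simp only [hp_def]; ring_nf
      _ ≤ (A * P ^ 2 + R) * δ ^ 3 := ((abs_add_le _ _).trans (add_le_add h₂ hr₀)).trans hδ4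
      _ ≤ C * δ ^ 3 := by gcongr
  · calc _ = |iteratedDerivWithin 2 (fun x => f x + p x) (Icc a b) xs - g| := by
          simp only [hp_def, add_assoc]
      _ ≤ A * P * δ ^ 2 := h₃.trans_eq (by ring)
      _ ≤ C * δ ^ 2 := by gcongr

theorem hasDerivAt_inv_sqrt_two_mul_sub {ec x : ℝ} (hx : ec < x) :
    HasDerivAt (fun E => (√(2 * (E - ec)))⁻¹) (-(√(2 * (x - ec)))⁻¹ ^ 3) x := by
  have hpos : 0 < √(2 * (x - ec)) := Real.sqrt_pos.2 (by linarith)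
  have hk := (((hasDerivAt_id' x).sub_const ec).const_mul 2).sqrt (by linarith : 2 * (x - ec) ≠ 0)
  refine (hk.fun_inv hpos.ne').congr_deriv ?_
  field_simp

theorem contDiffOn_inv_sqrt_two_mul_sub {ec : ℝ} {s : Set ℝ} (hs : ∀ x ∈ s, ec < x) {n : ℕ∞} :
    ContDiffOn ℝ n (fun E => (√(2 * (E - ec)))⁻¹) s :=
  ((contDiffOn_const.mul (contDiffOn_id.sub contDiffOn_const)).sqrt
    fun x hx => by simp only [id]; linarith [hs x hx]).inv
    fun x hx => (Real.sqrt_pos.2 (by simp only [id]; linarith [hs x hx])).ne'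

theorem stmt_13_general (E₁ E₂ E₀ : ℝ) (hE₀ : E₀ ∈ Set.Ioo E₁ E₂)
    (ec m₀ : ℝ) (hm₀ : 0 < m₀) (hgap : ∀ E ∈ Set.Icc E₁ E₂, m₀ ≤ E - ec)
    (G : ℝ → ℝ) (hG : ContDiffOn ℝ 3 G (Set.Icc E₁ E₂))
    (hG0 : G E₀ = 0)
    (hG1 : derivWithin G (Set.Icc E₁ E₂) E₀ = 0)
    (g : ℝ) (hg : iteratedDerivWithin 2 G (Set.Icc E₁ E₂) E₀ = g) (hgpos : 0 < g)
    (hGuniq : ∀ E ∈ Set.Icc E₁ E₂, E ≠ E₀ → G E₀ < G E)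
    (d D : ℝ) (hd : 0 < d) (hD : 0 < D)
    (Γ₀ : ℝ → ℝ) (hΓ : ∀ δ ∈ Set.Ioc (0 : ℝ) d, 0 < Γ₀ δ ∧ Γ₀ δ ≤ D * δ ^ 2)
    (r : ℝ → ℝ → ℝ) (Cr : ℝ)
    (hr : ∀ δ ∈ Set.Ioc (0 : ℝ) d,
      ContDiffOn ℝ 2 (fun E => r E δ) (Set.Icc E₁ E₂) ∧
      ∀ E ∈ Set.Icc E₁ E₂, ∀ n : ℕ, n ≤ 2 →
        |iteratedDerivWithin n (fun E' => r E' δ) (Set.Icc E₁ E₂) E| ≤ Cr * δ ^ 3) :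
    ∃ δ₀ ∈ Set.Ioc (0 : ℝ) d, ∃ C' : ℝ, 0 < C' ∧
      ∀ δ ∈ Set.Ioc (0 : ℝ) δ₀, ∃ Estar ∈ Set.Ioo E₁ E₂,
        (∀ E ∈ Set.Icc E₁ E₂, E ≠ Estar →
          G Estar + Γ₀ δ / Real.sqrt (2 * (Estar - ec)) + r Estar δ <
            G E + Γ₀ δ / Real.sqrt (2 * (E - ec)) + r E δ) ∧
        |Estar - E₀ - Γ₀ δ / (g * Real.sqrt (2 * (E₀ - ec)) ^ 3)| ≤ C' * δ ^ 3 ∧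
        |(G Estar + Γ₀ δ / Real.sqrt (2 * (Estar - ec)) + r Estar δ) -
            Γ₀ δ / Real.sqrt (2 * (E₀ - ec))| ≤ C' * δ ^ 3 ∧
        |iteratedDerivWithin 2
            (fun E => G E + Γ₀ δ / Real.sqrt (2 * (E - ec)) + r E δ)
            (Set.Icc E₁ E₂) Estar - g| ≤ C' * δ ^ 2 := by
  have hE₀K : E₀ ∈ Icc E₁ E₂ := Ioo_subset_Icc_self hE₀
  have hec : ∀ E ∈ Icc E₁ E₂, ec < E := fun E hE => by linarith [hgap E hE]
  have hCr : 0 ≤ Cr := nonneg_of_mul_nonneg_left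
    ((abs_nonneg _).trans ((hr d ⟨hd, le_rfl⟩).2 E₀ hE₀K 0 (by norm_num))) (by positivity)
  obtain ⟨δ₀, hδ₀, C, hC, hmain⟩ := exists_strictMinOn_add_const_mul_add hE₀ hG hG1 hg hgpos
    hGuniq (contDiffOn_inv_sqrt_two_mul_sub hec) hD.le hCr
  refine ⟨min d δ₀, ⟨lt_min hd hδ₀, min_le_left _ _⟩, C, hC, fun δ hδ => ?_⟩
  have hδd : δ ∈ Ioc 0 d := ⟨hδ.1, hδ.2.trans (min_le_left _ _)⟩
  obtain ⟨hΓpos, hΓle⟩ := hΓ δ hδd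
  obtain ⟨xs, hxs, hmin, h₁, h₂, h₃⟩ := hmain δ ⟨hδ.1, hδ.2.trans (min_le_right _ _)⟩ (Γ₀ δ)
    (fun E => r E δ) (by rwa [abs_of_pos hΓpos]) (hr δ hδd).1 (hr δ hδd).2
  have hψ₁ : derivWithin (fun E => (√(2 * (E - ec)))⁻¹) (Icc E₁ E₂) E₀ =
      -(√(2 * (E₀ - ec)))⁻¹ ^ 3 :=
    (hasDerivAt_inv_sqrt_two_mul_sub (hec E₀ hE₀K)).hasDerivWithinAt.derivWithin
      (uniqueDiffOn_Icc (hE₀.1.trans hE₀.2) E₀ hE₀K)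
  refine ⟨xs, hxs, ?_, ?_, ?_, ?_⟩
  · simpa only [div_eq_mul_inv] using hmin
  · convert h₁ using 2
    rw [hψ₁]
    field_simp
    ring
  · simpa only [div_eq_mul_inv, hG0, zero_add] using h₂
  · simpa only [div_eq_mul_inv] using h₃

/-- Δ = [E₁,E₂] with interior point E₀; `E − e_c ≥ m₀ > 0` on Δ, `k_c(E) := √(2(E−e_c))`.
`G` is C³ with `G ≥ 0`, `G(E₀) = 0`, `G′(E₀) = 0`, `g := G″(E₀) > 0` and `E₀` the
unique global minimizer; `Γ₀ : (0,d] → (0,∞)` with `Γ₀(δ) ≤ Dδ²`; `r` is C² in `E`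
with `|∂ⁿ_E r| ≤ Cδ³` for `n = 0,1,2`; `α(E,δ) := G(E) + Γ₀(δ)/k_c(E) + r(E,δ)`.
Then there are `δ₀ ∈ (0,d]` and `C′ > 0` such that for `δ ∈ (0,δ₀]`: `α(·,δ)` has a
unique interior global minimizer `E*(δ)` with
`|E*(δ) − E₀ − Γ₀(δ)/(g k_c(E₀)³)| ≤ C′δ³`, `|α(E*(δ),δ) − Γ₀(δ)/k_c(E₀)| ≤ C′δ³`,
and `|∂²_E α(E*(δ),δ) − g| ≤ C′δ²`. -/
theorem stmt_13 (E₁ E₂ E₀ : ℝ) (hE₀ : E₀ ∈ Set.Ioo E₁ E₂)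
    (ec m₀ : ℝ) (hm₀ : 0 < m₀) (hgap : ∀ E ∈ Set.Icc E₁ E₂, m₀ ≤ E - ec)
    (G : ℝ → ℝ) (hG : ContDiffOn ℝ 3 G (Set.Icc E₁ E₂))
    (hGnn : ∀ E ∈ Set.Icc E₁ E₂, 0 ≤ G E) (hG0 : G E₀ = 0)
    (hG1 : derivWithin G (Set.Icc E₁ E₂) E₀ = 0)
    (g : ℝ) (hg : iteratedDerivWithin 2 G (Set.Icc E₁ E₂) E₀ = g) (hgpos : 0 < g)
    (hGuniq : ∀ E ∈ Set.Icc E₁ E₂, E ≠ E₀ → G E₀ < G E)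
    (d D : ℝ) (hd : 0 < d) (hD : 0 < D)
    (Γ₀ : ℝ → ℝ) (hΓ : ∀ δ ∈ Set.Ioc (0 : ℝ) d, 0 < Γ₀ δ ∧ Γ₀ δ ≤ D * δ ^ 2)
    (r : ℝ → ℝ → ℝ) (Cr : ℝ)
    (hr : ∀ δ ∈ Set.Ioc (0 : ℝ) d,
      ContDiffOn ℝ 2 (fun E => r E δ) (Set.Icc E₁ E₂) ∧
      ∀ E ∈ Set.Icc E₁ E₂, ∀ n : ℕ, n ≤ 2 →
        |iteratedDerivWithin n (fun E' => r E' δ) (Set.Icc E₁ E₂) E| ≤ Cr * δ ^ 3) :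
    ∃ δ₀ ∈ Set.Ioc (0 : ℝ) d, ∃ C' : ℝ, 0 < C' ∧
      ∀ δ ∈ Set.Ioc (0 : ℝ) δ₀, ∃ Estar ∈ Set.Ioo E₁ E₂,
        (∀ E ∈ Set.Icc E₁ E₂, E ≠ Estar →
          G Estar + Γ₀ δ / Real.sqrt (2 * (Estar - ec)) + r Estar δ <
            G E + Γ₀ δ / Real.sqrt (2 * (E - ec)) + r E δ) ∧
        |Estar - E₀ - Γ₀ δ / (g * Real.sqrt (2 * (E₀ - ec)) ^ 3)| ≤ C' * δ ^ 3 ∧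
        |(G Estar + Γ₀ δ / Real.sqrt (2 * (Estar - ec)) + r Estar δ) -
            Γ₀ δ / Real.sqrt (2 * (E₀ - ec))| ≤ C' * δ ^ 3 ∧
        |iteratedDerivWithin 2
            (fun E => G E + Γ₀ δ / Real.sqrt (2 * (E - ec)) + r E δ)
            (Set.Icc E₁ E₂) Estar - g| ≤ C' * δ ^ 2 :=
  stmt_13_general E₁ E₂ E₀ hE₀ ec m₀ hm₀ hgap G hG hG0 hG1 g hg hgpos hGuniq d D hd hD Γ₀ hΓ r Cr hr
end

section
/- Let d > 0, D > 0, g₀ > 0, C > 0. Suppose G : Δ × (0,d] → ℝ is C² in E with |G(E,δ) − g₀δ²(E−E₀)²/2| ≤ Cδ³, |∂_E G(E,δ) − g₀δ²(E−E₀)| ≤ Cδ³ and |∂²_E G(E,δ) − g₀δ²| ≤ Cδ³ for all E ∈ Δ, and let r : Δ × (0,d] → ℝ be C² in E with |∂ⁿ_E r(E,δ)| ≤ Cδ³ for n = 0,1,2. Define α(E,δ) := G(E,δ) + Dδ²/k_c(E) + r(E,δ). Then: (i) the equation (E − E₀)·g₀·k_c(E)³ = D has at most one solution in Δ, and if (E₂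 − E₀)·g₀·k_c(E₂)³ > D it has a unique solution E₁ ∈ (E₀,E₂); (ii) assuming E₁ exists in the interior of Δ, there exist δ₀ ∈ (0,d] and C′ > 0 such that for all δ ∈ (0,δ₀] the global minimizer E*(δ) of α(·,δ) on Δ satisfies |E*(δ) − E₁| ≤ C′δ, |α(E*(δ),δ) − δ²(D/k_c(E₁) + g₀(E₁−E₀)²/2)| ≤ C′δ³, and |∂²_E α(E*(δ),δ) − δ²(g₀ + 3D/k_c(E₁)⁵)| ≤ C′δ³. -/
/-!
Write `k(E) = √(2(E - e_c))` and let `φ(E) = D / k(E) + g₀ (E - E₀)² / 2` be the profile, so that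
`α(·, δ) = δ² φ + O(δ³)` together with its first two derivatives. Part (i) holds because
`(E - E₀) g₀ k(E)³` is strictly increasing where it is positive. For (ii), the root `E₁` is the
critical point of `φ`, and `φ'(E) - g₀ E = -g₀ E₀ - D / k(E)³` is increasing; hence `φ` grows
quadratically away from `E₁`. Comparing `α(E*)` with `α(E₁)` gives `|E* - E₁| = O(√δ)`, so `E*` is
interior for small `δ`; then `α'(E*) = 0` forces `|φ'(E*)| = O(δ)`, hence `|E* - E₁| = O(δ)`. The
value and curvature estimates follow since `φ` and `k⁻⁵` are Lipschitz on the compact interval.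
-/

open Set Topology
open scoped NNReal

section StronglyMonotoneDeriv

variable {φ φ' : ℝ → ℝ} {a b g x₀ : ℝ}

theorem quadratic_growth_of_monotoneOn_deriv_sub_mul
    (hφ : ∀ x ∈ Icc a b, HasDerivAt φ (φ' x) x)
    (hmono : MonotoneOn (fun x => φ' x - g * x) (Icc a b))
    (hx₀ : x₀ ∈ Icc a b) (h0 : φ' x₀ = 0) {x : ℝ} (hx : x ∈ Icc a b) :
    φ x₀ + g / 2 * (x - x₀) ^ 2 ≤ φ x := by
  set ψ : ℝ → ℝ := fun x => φ x - g / 2 * (x - x₀) ^ 2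
  set ψ' : ℝ → ℝ := fun y => (φ' y - g * y) - (φ' x₀ - g * x₀)
  have hψ : ∀ y ∈ Icc a b, HasDerivAt ψ (ψ' y) y := fun y hy => by
    have hq : HasDerivAt (fun y => g / 2 * (y - x₀) ^ 2) (g * (y - x₀)) y :=
      ((((hasDerivAt_id' y).sub_const x₀).fun_pow 2).const_mul (g / 2)).congr_deriv (by ring)
    exact ((hφ y hy).sub hq).congr_deriv (by simp only [ψ', h0]; ring)
  have hcont : ContinuousOn ψ (Icc a b) := fun y hy => (hψ y hy).continuousAt.continuousWithinAt
  have hderiv {s : Set ℝ} (hs : s ⊆ Icc a b) :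
      ∀ y ∈ interior s, HasDerivWithinAt ψ (ψ' y) (interior s) y :=
    fun y hy => (hψ y (hs (interior_subset hy))).hasDerivWithinAt
  suffices ψ x₀ ≤ ψ x by simp only [ψ, sub_self] at this; linarith
  rcases le_total x₀ x with hle | hle
  · have hsub : Icc x₀ b ⊆ Icc a b := Icc_subset_Icc_left hx₀.1
    refine monotoneOn_of_hasDerivWithinAt_nonneg (convex_Icc x₀ b) (hcont.mono hsub) (hderiv hsub)
      (fun y hy => ?_) (left_mem_Icc.2 (hle.trans hx.2)) ⟨hle, hx.2⟩ hle
    rw [interior_Icc] at hy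
    exact sub_nonneg.2 (hmono hx₀ (hsub (Ioo_subset_Icc_self hy)) hy.1.le)
  · have hsub : Icc a x₀ ⊆ Icc a b := Icc_subset_Icc_right hx₀.2
    refine antitoneOn_of_hasDerivWithinAt_nonpos (convex_Icc a x₀) (hcont.mono hsub) (hderiv hsub)
      (fun y hy => ?_) ⟨hx.1, hle⟩ (right_mem_Icc.2 (hx.1.trans hle)) hle
    rw [interior_Icc] at hy
    exact sub_nonpos.2 (hmono (hsub (Ioo_subset_Icc_self hy)) hx₀ hy.2.le)

theorem mul_abs_sub_le_abs_of_monotoneOn_sub_mul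
    (hmono : MonotoneOn (fun x => φ' x - g * x) (Icc a b))
    (hx₀ : x₀ ∈ Icc a b) (h0 : φ' x₀ = 0) {x : ℝ} (hx : x ∈ Icc a b) :
    g * |x - x₀| ≤ |φ' x| := by
  rcases le_total x₀ x with hle | hle
  · have := hmono hx₀ hx hle
    simp only [h0] at this
    rw [abs_of_nonneg (sub_nonneg.2 hle)]
    exact (by linarith : g * (x - x₀) ≤ φ' x).trans (le_abs_self _)
  · have := hmono hx hx₀ hle
    simp only [h0] at this
    rw [abs_of_nonpos (sub_nonpos.2 hle)]
    exact (by linarith : g * -(x - x₀) ≤ -φ' x).trans (neg_le_abs _)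

theorem mem_Ioo_and_mul_abs_sub_le_of_isMinOn
    (hφ : ∀ x ∈ Icc a b, HasDerivAt φ (φ' x) x)
    (hmono : MonotoneOn (fun x => φ' x - g * x) (Icc a b))
    (hx₀ : x₀ ∈ Ioo a b) (h0 : φ' x₀ = 0) (hg : 0 < g) {α : ℝ → ℝ} {t ε : ℝ} (ht : 0 < t)
    (hα : ∀ x ∈ Icc a b, |α x - t * φ x| ≤ t * ε)
    (hα' : ∀ x ∈ Ioo a b, |deriv α x - t * φ' x| ≤ t * ε)
    (hε : 4 * ε < g * min (x₀ - a) (b - x₀) ^ 2)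
    {x : ℝ} (hx : x ∈ Icc a b) (hmin : IsMinOn α (Icc a b) x) :
    x ∈ Ioo a b ∧ g * |x - x₀| ≤ ε := by
  have hx₀' := Ioo_subset_Icc_self hx₀
  have hquad := quadratic_growth_of_monotoneOn_deriv_sub_mul hφ hmono hx₀' h0 hx
  have hsq : g * (x - x₀) ^ 2 < g * min (x₀ - a) (b - x₀) ^ 2 := by
    have : t * (g / 2 * (x - x₀) ^ 2) ≤ t * (2 * ε) := by
      linarith [abs_le.1 (hα x hx), abs_le.1 (hα x₀ hx₀'), isMinOn_iff.1 hmin x₀ hx₀',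
        mul_le_mul_of_nonneg_left hquad ht.le]
    linarith [le_of_mul_le_mul_left this ht]
  have hρ : 0 < min (x₀ - a) (b - x₀) := lt_min (sub_pos.2 hx₀.1) (sub_pos.2 hx₀.2)
  have hclose : |x - x₀| < min (x₀ - a) (b - x₀) := by
    rw [← abs_of_pos hρ, ← sq_lt_sq]
    exact lt_of_mul_lt_mul_left hsq hg.le
  have hxI : x ∈ Ioo a b := by
    obtain ⟨h1, h2⟩ := abs_lt.1 hclose
    constructor <;> linarith [min_le_left (x₀ - a) (b - x₀), min_le_right (x₀ - a) (b - x₀)]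
  refine ⟨hxI, (mul_abs_sub_le_abs_of_monotoneOn_sub_mul hmono hx₀' h0 hx).trans ?_⟩
  have hcrit := (hmin.isLocalMin (Icc_mem_nhds hxI.1 hxI.2)).deriv_eq_zero
  have := hα' x hxI
  rw [hcrit, zero_sub, abs_neg, abs_mul, abs_of_pos ht] at this
  exact le_of_mul_le_mul_left this ht

end StronglyMonotoneDeriv

section SqrtTwoMulSub

variable {ec x : ℝ}

theorem hasDerivAt_sqrt_two_mul_sub (hx : ec < x) :
    HasDerivAt (fun E => √(2 * (E - ec))) (√(2 * (x - ec)))⁻¹ x := by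
  have h2 : 0 < 2 * (x - ec) := by linarith
  refine ((Real.hasDerivAt_sqrt h2.ne').comp x
    (((hasDerivAt_id' x).sub_const ec).const_mul 2)).congr_deriv ?_
  field_simp

theorem hasDerivAt_div_sqrt_pow (c : ℝ) (m : ℕ) (hx : ec < x) :
    HasDerivAt (fun E => c / √(2 * (E - ec)) ^ m)
      (-(m * c) / √(2 * (x - ec)) ^ (m + 2)) x := by
  have hk : 0 < √(2 * (x - ec)) := Real.sqrt_pos.2 (by linarith)
  refine ((hasDerivAt_const x c).div ((hasDerivAt_sqrt_two_mul_sub hx).fun_pow m)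
    (pow_pos hk m).ne').congr_deriv ?_
  rcases m with _ | m
  · simp
  · simp only [Nat.add_sub_cancel]
    field_simp
    ring

theorem contDiffAt_div_sqrt_pow {n : WithTop ℕ∞} (c : ℝ) (m : ℕ) (hx : ec < x) :
    ContDiffAt ℝ n (fun E => c / √(2 * (E - ec)) ^ m) x := by
  have h2 : 2 * (x - ec) ≠ 0 := by linarith
  have hlin : ContDiffAt ℝ n (fun E : ℝ => 2 * (E - ec)) x := by fun_prop
  refine contDiffAt_const.div ((hlin.sqrt h2).pow m) ?_
  exact (pow_pos (Real.sqrt_pos.2 (by linarith)) m).ne'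

theorem iteratedDerivWithin_two_div_sqrt (c : ℝ) {s : Set ℝ} (hs : UniqueDiffOn ℝ s) (hxs : x ∈ s)
    (hx : ec < x) :
    iteratedDerivWithin 2 (fun E => c / √(2 * (E - ec))) s x = 3 * c / √(2 * (x - ec)) ^ 5 := by
  have hpow (E : ℝ) : c / √(2 * (E - ec)) = c / √(2 * (E - ec)) ^ 1 := by rw [pow_one]
  simp only [hpow]
  rw [iteratedDerivWithin_eq_iteratedDeriv hs (contDiffAt_div_sqrt_pow c 1 hx) hxs,
    iteratedDeriv_succ, iteratedDeriv_one]
  have hderiv : deriv (fun E => c / √(2 * (E - ec)) ^ 1) =ᶠ[𝓝 x]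
      fun E => -c / √(2 * (E - ec)) ^ 3 := by
    filter_upwards [lt_mem_nhds hx] with E hE
    simpa using (hasDerivAt_div_sqrt_pow c 1 hE).deriv
  rw [hderiv.deriv_eq, (hasDerivAt_div_sqrt_pow (-c) 3 hx).deriv]
  ring

end SqrtTwoMulSub

theorem LipschitzOnWith.exists_of_forall_contDiffAt {f : ℝ → ℝ} {a b : ℝ}
    (hf : ∀ x ∈ Icc a b, ContDiffAt ℝ 1 f x) : ∃ K, LipschitzOnWith K f (Icc a b) :=
  ContDiffOn.exists_lipschitzOnWith (fun x hx => (hf x hx).contDiffWithinAt) one_ne_zero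
    (convex_Icc a b) isCompact_Icc

noncomputable def profile (ec E₀ g₀ D E : ℝ) : ℝ := D / √(2 * (E - ec)) + g₀ * (E - E₀) ^ 2 / 2

noncomputable def profileDeriv (ec E₀ g₀ D E : ℝ) : ℝ := g₀ * (E - E₀) - D / √(2 * (E - ec)) ^ 3

section Profile

variable {ec E₀ g₀ D x : ℝ}

theorem hasDerivAt_profile (hx : ec < x) :
    HasDerivAt (profile ec E₀ g₀ D) (profileDeriv ec E₀ g₀ D x) x := by
  have hq : HasDerivAt (fun E => g₀ * (E - E₀) ^ 2 / 2) (g₀ * (x - E₀)) x :=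
    ((((hasDerivAt_id' x).sub_const E₀).fun_pow 2).const_mul g₀ |>.div_const 2).congr_deriv
      (by ring)
  have hk : HasDerivAt (fun E => D / √(2 * (E - ec))) (-D / √(2 * (x - ec)) ^ 3) x := by
    simpa using hasDerivAt_div_sqrt_pow D 1 hx
  exact (hk.add hq).congr_deriv (by unfold profileDeriv; ring)

theorem contDiffAt_profile {n : WithTop ℕ∞} (hx : ec < x) :
    ContDiffAt ℝ n (profile ec E₀ g₀ D) x := by
  have hk := contDiffAt_div_sqrt_pow (n := n) D 1 hx
  simp only [pow_one] at hk
  exact hk.add (by fun_prop : ContDiffAt ℝ n (fun E => g₀ * (E - E₀) ^ 2 / 2) x)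

theorem monotoneOn_profileDeriv_sub_mul (hD : 0 ≤ D) :
    MonotoneOn (fun E => profileDeriv ec E₀ g₀ D E - g₀ * E) (Ioi ec) := by
  intro x hx y hy hxy
  have hkx : 0 < √(2 * (x - ec)) := Real.sqrt_pos.2 (by linarith [mem_Ioi.1 hx])
  have hk : √(2 * (x - ec)) ^ 3 ≤ √(2 * (y - ec)) ^ 3 := by gcongr
  have : D / √(2 * (y - ec)) ^ 3 ≤ D / √(2 * (x - ec)) ^ 3 :=
    div_le_div_of_nonneg_left hD (by positivity) hk
  simp only [profileDeriv]
  linarith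

theorem profileDeriv_eq_zero (hx : ec < x) (hroot : (x - E₀) * g₀ * √(2 * (x - ec)) ^ 3 = D) :
    profileDeriv ec E₀ g₀ D x = 0 := by
  have hk : 0 < √(2 * (x - ec)) := Real.sqrt_pos.2 (by linarith)
  rw [profileDeriv, ← hroot]
  field_simp
  ring

end Profile

section Root

variable {ec E₀ g₀ : ℝ}

theorem strictMonoOn_sub_mul_mul_sqrt_pow_three (hg₀ : 0 < g₀) :
    StrictMonoOn (fun E => (E - E₀) * g₀ * √(2 * (E - ec)) ^ 3) (Ici E₀ ∩ Ici ec) := by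
  intro x ⟨hx₀, hxc⟩ y ⟨hy₀, hyc⟩ hxy
  have hy : 0 < √(2 * (y - ec)) := Real.sqrt_pos.2 (by linarith [mem_Ici.1 hxc])
  calc (x - E₀) * g₀ * √(2 * (x - ec)) ^ 3
      ≤ (x - E₀) * g₀ * √(2 * (y - ec)) ^ 3 := by
        have := sub_nonneg.2 (mem_Ici.1 hx₀)
        gcongr
    _ < (y - E₀) * g₀ * √(2 * (y - ec)) ^ 3 := by gcongr

theorem lt_of_sub_mul_mul_sqrt_pow_three_eq {D E : ℝ} (hg₀ : 0 < g₀) (hD : 0 < D)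
    (hroot : (E - E₀) * g₀ * √(2 * (E - ec)) ^ 3 = D) : E₀ < E := by
  by_contra! hE
  have : (E - E₀) * g₀ * √(2 * (E - ec)) ^ 3 ≤ 0 :=
    mul_nonpos_of_nonpos_of_nonneg (mul_nonpos_of_nonpos_of_nonneg (by linarith) hg₀.le)
      (by positivity)
  linarith

theorem eq_of_sub_mul_mul_sqrt_pow_three_eq {D a b : ℝ} (hg₀ : 0 < g₀) (hD : 0 < D)
    (ha : ec ≤ a) (hb : ec ≤ b) (hra : (a - E₀) * g₀ * √(2 * (a - ec)) ^ 3 = D)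
    (hrb : (b - E₀) * g₀ * √(2 * (b - ec)) ^ 3 = D) : a = b :=
  (strictMonoOn_sub_mul_mul_sqrt_pow_three hg₀).injOn
    ⟨(lt_of_sub_mul_mul_sqrt_pow_three_eq hg₀ hD hra).le, ha⟩
    ⟨(lt_of_sub_mul_mul_sqrt_pow_three_eq hg₀ hD hrb).le, hb⟩ (hra.trans hrb.symm)

end Root

noncomputable def alpha (ec D δ : ℝ) (G r : ℝ → ℝ) (E : ℝ) : ℝ :=
  G E + D * δ ^ 2 / √(2 * (E - ec)) + r E

section Alpha

variable {ec E₀ g₀ D δ c x : ℝ} {G r : ℝ → ℝ}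

theorem abs_alpha_sub_profile_le (hG : |G x - g₀ * δ ^ 2 * (x - E₀) ^ 2 / 2| ≤ c)
    (hr : |r x| ≤ c) : |alpha ec D δ G r x - δ ^ 2 * profile ec E₀ g₀ D x| ≤ 2 * c := by
  have h : alpha ec D δ G r x - δ ^ 2 * profile ec E₀ g₀ D x =
      (G x - g₀ * δ ^ 2 * (x - E₀) ^ 2 / 2) + r x := by
    unfold alpha profile; ring
  rw [h]
  exact (abs_add_le _ _).trans (by linarith)

theorem abs_deriv_alpha_sub_profileDeriv_le (hx : ec < x) (hGd : DifferentiableAt ℝ G x)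
    (hrd : DifferentiableAt ℝ r x) (hG : |deriv G x - g₀ * δ ^ 2 * (x - E₀)| ≤ c)
    (hr : |deriv r x| ≤ c) :
    |deriv (alpha ec D δ G r) x - δ ^ 2 * profileDeriv ec E₀ g₀ D x| ≤ 2 * c := by
  have hk : HasDerivAt (fun E => D * δ ^ 2 / √(2 * (E - ec)))
      (-(D * δ ^ 2) / √(2 * (x - ec)) ^ 3) x := by
    simpa using hasDerivAt_div_sqrt_pow (D * δ ^ 2) 1 hx
  have hα : HasDerivAt (alpha ec D δ G r)
      (deriv G x + -(D * δ ^ 2) / √(2 * (x - ec)) ^ 3 + deriv r x) x :=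
    (hGd.hasDerivAt.fun_add hk).fun_add hrd.hasDerivAt
  have h : deriv (alpha ec D δ G r) x - δ ^ 2 * profileDeriv ec E₀ g₀ D x =
      (deriv G x - g₀ * δ ^ 2 * (x - E₀)) + deriv r x := by
    rw [hα.deriv]
    unfold profileDeriv; ring
  rw [h]
  exact (abs_add_le _ _).trans (by linarith)

theorem iteratedDerivWithin_two_alpha {s : Set ℝ} (hs : UniqueDiffOn ℝ s) (hxs : x ∈ s)
    (hx : ec < x) (hG : ContDiffWithinAt ℝ 2 G s x) (hr : ContDiffWithinAt ℝ 2 r s x) :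
    iteratedDerivWithin 2 (alpha ec D δ G r) s x =
      iteratedDerivWithin 2 G s x + 3 * (D * δ ^ 2) / √(2 * (x - ec)) ^ 5 +
        iteratedDerivWithin 2 r s x := by
  have hk : ContDiffWithinAt ℝ 2 (fun E => D * δ ^ 2 / √(2 * (E - ec))) s x := by
    simpa using (contDiffAt_div_sqrt_pow (D * δ ^ 2) 1 hx).contDiffWithinAt
  change iteratedDerivWithin 2 (fun E => G E + D * δ ^ 2 / √(2 * (E - ec)) + r E) s x = _
  rw [iteratedDerivWithin_fun_add hxs hs (hG.add hk) hr,
    iteratedDerivWithin_fun_add hxs hs hG hk, iteratedDerivWithin_two_div_sqrt _ hs hxs hx]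

end Alpha

section Minimizer

variable {a b ec E₀ g₀ D C δ E₁ Estar : ℝ} {G r : ℝ → ℝ}

theorem abs_sub_le_of_isMinOn_alpha (hec : ec < a) (hE₁ : E₁ ∈ Ioo a b)
    (hroot : (E₁ - E₀) * g₀ * √(2 * (E₁ - ec)) ^ 3 = D) (hg₀ : 0 < g₀) (hD : 0 ≤ D)
    (hδ : 0 < δ) (hGc : ContDiffOn ℝ 2 G (Icc a b))
    (hG : ∀ E ∈ Icc a b, |G E - g₀ * δ ^ 2 * (E - E₀) ^ 2 / 2| ≤ C * δ ^ 3 ∧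
        |derivWithin G (Icc a b) E - g₀ * δ ^ 2 * (E - E₀)| ≤ C * δ ^ 3)
    (hrc : ContDiffOn ℝ 2 r (Icc a b))
    (hr : ∀ E ∈ Icc a b, ∀ n : ℕ, n ≤ 1 → |iteratedDerivWithin n r (Icc a b) E| ≤ C * δ ^ 3)
    (hsmall : 8 * C * δ < g₀ * min (E₁ - a) (b - E₁) ^ 2)
    (hEstar : Estar ∈ Icc a b) (hmin : IsMinOn (alpha ec D δ G r) (Icc a b) Estar) :
    |Estar - E₁| ≤ 2 * C / g₀ * δ := by
  have hecS : ∀ E ∈ Icc a b, ec < E := fun E hE => hec.trans_le hE.1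
  have hα : ∀ E ∈ Icc a b,
      |alpha ec D δ G r E - δ ^ 2 * profile ec E₀ g₀ D E| ≤ δ ^ 2 * (2 * C * δ) := by
    intro E hE
    have hr0 : |r E| ≤ C * δ ^ 3 := by simpa using hr E hE 0 (by norm_num)
    exact (abs_alpha_sub_profile_le (hG E hE).1 hr0).trans_eq (by ring)
  have hα' : ∀ E ∈ Ioo a b,
      |deriv (alpha ec D δ G r) E - δ ^ 2 * profileDeriv ec E₀ g₀ D E| ≤ δ ^ 2 * (2 * C * δ) := by
    intro E hE
    have hnhds := Icc_mem_nhds hE.1 hE.2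
    have hG1 := (hG E (Ioo_subset_Icc_self hE)).2
    have hr1 := hr E (Ioo_subset_Icc_self hE) 1 le_rfl
    rw [derivWithin_of_mem_nhds hnhds] at hG1
    rw [iteratedDerivWithin_one, derivWithin_of_mem_nhds hnhds] at hr1
    exact (abs_deriv_alpha_sub_profileDeriv_le (hecS E (Ioo_subset_Icc_self hE))
      ((hGc.contDiffAt hnhds).differentiableAt two_ne_zero)
      ((hrc.contDiffAt hnhds).differentiableAt two_ne_zero) hG1 hr1).trans_eq (by ring)
  obtain ⟨-, hclose⟩ := mem_Ioo_and_mul_abs_sub_le_of_isMinOn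
    (fun E hE => hasDerivAt_profile (hecS E hE)) ((monotoneOn_profileDeriv_sub_mul hD).mono hecS)
    hE₁ (profileDeriv_eq_zero (hecS E₁ (Ioo_subset_Icc_self hE₁)) hroot) hg₀ (pow_pos hδ 2) hα
    hα' (by linarith) hEstar hmin
  rw [div_mul_eq_mul_div, le_div_iff₀ hg₀]
  linarith

theorem estimates_of_isMinOn_alpha (hec : ec < a) (hE₁ : E₁ ∈ Ioo a b)
    (hroot : (E₁ - E₀) * g₀ * √(2 * (E₁ - ec)) ^ 3 = D) (hg₀ : 0 < g₀) (hD : 0 ≤ D)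
    (hδ : 0 < δ) (hGc : ContDiffOn ℝ 2 G (Icc a b))
    (hG : ∀ E ∈ Icc a b, |G E - g₀ * δ ^ 2 * (E - E₀) ^ 2 / 2| ≤ C * δ ^ 3 ∧
        |derivWithin G (Icc a b) E - g₀ * δ ^ 2 * (E - E₀)| ≤ C * δ ^ 3 ∧
        |iteratedDerivWithin 2 G (Icc a b) E - g₀ * δ ^ 2| ≤ C * δ ^ 3)
    (hrc : ContDiffOn ℝ 2 r (Icc a b))
    (hr : ∀ E ∈ Icc a b, ∀ n : ℕ, n ≤ 2 → |iteratedDerivWithin n r (Icc a b) E| ≤ C * δ ^ 3)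
    (hsmall : 8 * C * δ < g₀ * min (E₁ - a) (b - E₁) ^ 2)
    {L L₅ : ℝ≥0} (hL : LipschitzOnWith L (profile ec E₀ g₀ D) (Icc a b))
    (hL₅ : LipschitzOnWith L₅ (fun E => 3 * D / √(2 * (E - ec)) ^ 5) (Icc a b))
    (hEstar : Estar ∈ Icc a b) (hmin : IsMinOn (alpha ec D δ G r) (Icc a b) Estar) :
    |Estar - E₁| ≤ 2 * C / g₀ * δ ∧
    |alpha ec D δ G r Estar - δ ^ 2 * profile ec E₀ g₀ D E₁| ≤
      (2 * C + L * (2 * C / g₀)) * δ ^ 3 ∧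
    |iteratedDerivWithin 2 (alpha ec D δ G r) (Icc a b) Estar -
        δ ^ 2 * (g₀ + 3 * D / √(2 * (E₁ - ec)) ^ 5)| ≤
      (2 * C + L₅ * (2 * C / g₀)) * δ ^ 3 := by
  have hclose := abs_sub_le_of_isMinOn_alpha hec hE₁ hroot hg₀ hD hδ hGc
    (fun E hE => ⟨(hG E hE).1, (hG E hE).2.1⟩) hrc
    (fun E hE n hn => hr E hE n (hn.trans one_le_two)) hsmall hEstar hmin
  have hlip {f : ℝ → ℝ} {K : ℝ≥0} (hf : LipschitzOnWith K f (Icc a b)) :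
      |δ ^ 2 * (f Estar - f E₁)| ≤ δ ^ 2 * (K * (2 * C / g₀ * δ)) := by
    rw [abs_mul, abs_of_pos (pow_pos hδ 2), ← Real.dist_eq]
    gcongr
    exact (hf.dist_le_mul _ hEstar _ (Ioo_subset_Icc_self hE₁)).trans
      (by rw [Real.dist_eq]; gcongr)
  have hr0 : |r Estar| ≤ C * δ ^ 3 := by simpa using hr Estar hEstar 0 (by norm_num)
  refine ⟨hclose, ?_, ?_⟩
  · calc |alpha ec D δ G r Estar - δ ^ 2 * profile ec E₀ g₀ D E₁|
        = |(alpha ec D δ G r Estar - δ ^ 2 * profile ec E₀ g₀ D Estar) +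
            δ ^ 2 * (profile ec E₀ g₀ D Estar - profile ec E₀ g₀ D E₁)| := by ring_nf
      _ ≤ 2 * (C * δ ^ 3) + δ ^ 2 * (L * (2 * C / g₀ * δ)) :=
        (abs_add_le _ _).trans
          (add_le_add (abs_alpha_sub_profile_le (hG Estar hEstar).1 hr0) (hlip hL))
      _ = (2 * C + L * (2 * C / g₀)) * δ ^ 3 := by ring
  · rw [iteratedDerivWithin_two_alpha (uniqueDiffOn_Icc (hE₁.1.trans hE₁.2)) hEstar
      (hec.trans_le hEstar.1) (hGc Estar hEstar) (hrc Estar hEstar)]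
    calc _ = |(iteratedDerivWithin 2 G (Icc a b) Estar - g₀ * δ ^ 2) +
            iteratedDerivWithin 2 r (Icc a b) Estar +
            δ ^ 2 * (3 * D / √(2 * (Estar - ec)) ^ 5 - 3 * D / √(2 * (E₁ - ec)) ^ 5)| := by
          ring_nf
      _ ≤ C * δ ^ 3 + C * δ ^ 3 + δ ^ 2 * (L₅ * (2 * C / g₀ * δ)) :=
        (abs_add_le _ _).trans (add_le_add ((abs_add_le _ _).trans
          (add_le_add (hG Estar hEstar).2.2 (hr Estar hEstar 2 le_rfl))) (hlip hL₅))
      _ = (2 * C + L₅ * (2 * C / g₀)) * δ ^ 3 := by ring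

end Minimizer

/-- Δ = [E₁′,E₂] with interior point E₀; `E − e_c ≥ m₀ > 0` on Δ; `k_c(E) := √(2(E−e_c))`.
`G(·,δ)` is C² with `G ≈ g₀δ²(E−E₀)²/2`, `∂_E G ≈ g₀δ²(E−E₀)`, `∂²_E G ≈ g₀δ²` up to
`O(δ³)`; `r(·,δ)` is C² with `|∂ⁿ_E r| ≤ Cδ³` (n = 0,1,2);
`α(E,δ) := G(E,δ) + Dδ²/k_c(E) + r(E,δ)`.  Then:
(i) the equation `(E−E₀) g₀ k_c(E)³ = D` has at most one solution in Δ, and if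
`(E₂−E₀) g₀ k_c(E₂)³ > D` it has a unique solution `E₁ ∈ (E₀,E₂)`;
(ii) if such a solution `E₁` lies in the interior of Δ, then there are `δ₀ ∈ (0,d]`
and `C′ > 0` such that for all `δ ∈ (0,δ₀]` the global minimizer `E*(δ)` of `α(·,δ)`
on Δ satisfies `|E*(δ) − E₁| ≤ C′δ`,
`|α(E*(δ),δ) − δ²(D/k_c(E₁) + g₀(E₁−E₀)²/2)| ≤ C′δ³`, and
`|∂²_E α(E*(δ),δ) − δ²(g₀ + 3D/k_c(E₁)⁵)| ≤ C′δ³`. -/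
theorem stmt_14 (E₁' E₂ E₀ : ℝ) (hE₀ : E₀ ∈ Set.Ioo E₁' E₂)
    (ec m₀ : ℝ) (hm₀ : 0 < m₀) (hgap : ∀ E ∈ Set.Icc E₁' E₂, m₀ ≤ E - ec)
    (d D g₀ C : ℝ) (hd : 0 < d) (hD : 0 < D) (hg₀ : 0 < g₀) (hC : 0 < C)
    (G : ℝ → ℝ → ℝ)
    (hG : ∀ δ ∈ Set.Ioc (0 : ℝ) d,
      ContDiffOn ℝ 2 (fun E => G E δ) (Set.Icc E₁' E₂) ∧
      ∀ E ∈ Set.Icc E₁' E₂,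
        |G E δ - g₀ * δ ^ 2 * (E - E₀) ^ 2 / 2| ≤ C * δ ^ 3 ∧
        |derivWithin (fun E' => G E' δ) (Set.Icc E₁' E₂) E - g₀ * δ ^ 2 * (E - E₀)|
          ≤ C * δ ^ 3 ∧
        |iteratedDerivWithin 2 (fun E' => G E' δ) (Set.Icc E₁' E₂) E - g₀ * δ ^ 2|
          ≤ C * δ ^ 3)
    (r : ℝ → ℝ → ℝ)
    (hr : ∀ δ ∈ Set.Ioc (0 : ℝ) d,
      ContDiffOn ℝ 2 (fun E => r E δ) (Set.Icc E₁' E₂) ∧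
      ∀ E ∈ Set.Icc E₁' E₂, ∀ n : ℕ, n ≤ 2 →
        |iteratedDerivWithin n (fun E' => r E' δ) (Set.Icc E₁' E₂) E| ≤ C * δ ^ 3) :
    ((∀ a ∈ Set.Icc E₁' E₂, ∀ b ∈ Set.Icc E₁' E₂,
        (a - E₀) * g₀ * Real.sqrt (2 * (a - ec)) ^ 3 = D →
        (b - E₀) * g₀ * Real.sqrt (2 * (b - ec)) ^ 3 = D → a = b) ∧
      (D < (E₂ - E₀) * g₀ * Real.sqrt (2 * (E₂ - ec)) ^ 3 →
        ∃ Eone ∈ Set.Ioo E₀ E₂,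
          (Eone - E₀) * g₀ * Real.sqrt (2 * (Eone - ec)) ^ 3 = D)) ∧
    (∀ Eone ∈ Set.Ioo E₁' E₂,
      (Eone - E₀) * g₀ * Real.sqrt (2 * (Eone - ec)) ^ 3 = D →
      ∃ δ₀ ∈ Set.Ioc (0 : ℝ) d, ∃ C' : ℝ, 0 < C' ∧
        ∀ δ ∈ Set.Ioc (0 : ℝ) δ₀, ∀ Estar ∈ Set.Icc E₁' E₂,
          (∀ E ∈ Set.Icc E₁' E₂,
            G Estar δ + D * δ ^ 2 / Real.sqrt (2 * (Estar - ec)) + r Estar δ ≤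
              G E δ + D * δ ^ 2 / Real.sqrt (2 * (E - ec)) + r E δ) →
          |Estar - Eone| ≤ C' * δ ∧
          |(G Estar δ + D * δ ^ 2 / Real.sqrt (2 * (Estar - ec)) + r Estar δ) -
              δ ^ 2 * (D / Real.sqrt (2 * (Eone - ec)) + g₀ * (Eone - E₀) ^ 2 / 2)|
            ≤ C' * δ ^ 3 ∧
          |iteratedDerivWithin 2
              (fun E => G E δ + D * δ ^ 2 / Real.sqrt (2 * (E - ec)) + r E δ)
              (Set.Icc E₁' E₂) Estar -
              δ ^ 2 * (g₀ + 3 * D / Real.sqrt (2 * (Eone - ec)) ^ 5)| ≤ C' * δ ^ 3) := by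
  have hecS : ∀ E ∈ Icc E₁' E₂, ec < E := fun E hE => by linarith [hgap E hE]
  refine ⟨⟨fun x hx y hy =>
    eq_of_sub_mul_mul_sqrt_pow_three_eq hg₀ hD (hecS x hx).le (hecS y hy).le,
    fun hlt => ?_⟩, fun E₁ hE₁ hroot => ?_⟩
  · refine intermediate_value_Ioo hE₀.2.le (Continuous.continuousOn (by fun_prop)) ⟨?_, hlt⟩
    simpa using hD
  obtain ⟨L, hL⟩ := LipschitzOnWith.exists_of_forall_contDiffAt fun E hE =>
    contDiffAt_profile (E₀ := E₀) (g₀ := g₀) (D := D) (hecS E hE)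
  obtain ⟨L₅, hL₅⟩ := LipschitzOnWith.exists_of_forall_contDiffAt fun E hE =>
    contDiffAt_div_sqrt_pow (3 * D) 5 (hecS E hE)
  set ρ := min (E₁ - E₁') (E₂ - E₁)
  have hρ : 0 < ρ := lt_min (sub_pos.2 hE₁.1) (sub_pos.2 hE₁.2)
  have hCg : 0 ≤ 2 * C / g₀ := by positivity
  refine ⟨min d (g₀ * ρ ^ 2 / (16 * C)), ⟨by positivity, min_le_left _ _⟩,
    2 * C + 2 * C / g₀ + L * (2 * C / g₀) + L₅ * (2 * C / g₀), by positivity,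
    fun δ ⟨hδ, hδδ₀⟩ Estar hEstar hmin => ?_⟩
  have hsmall : 8 * C * δ < g₀ * ρ ^ 2 := by
    have := hδδ₀.trans (min_le_right _ _)
    rw [le_div_iff₀ (by positivity)] at this
    nlinarith [mul_pos hg₀ (pow_pos hρ 2)]
  obtain ⟨hGc, hGb⟩ := hG δ ⟨hδ, hδδ₀.trans (min_le_left _ _)⟩
  obtain ⟨hrc, hrb⟩ := hr δ ⟨hδ, hδδ₀.trans (min_le_left _ _)⟩
  obtain ⟨hclose, hvalue, hcurv⟩ := estimates_of_isMinOn_alpha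
    (hecS E₁' ⟨le_rfl, (hE₁.1.trans hE₁.2).le⟩) hE₁ hroot hg₀ hD.le hδ hGc hGb hrc hrb hsmall
    hL hL₅ hEstar (isMinOn_iff.2 hmin)
  have hL₀ := mul_nonneg L.coe_nonneg hCg
  have hL₅₀ := mul_nonneg L₅.coe_nonneg hCg
  refine ⟨hclose.trans (mul_le_mul_of_nonneg_right ?_ hδ.le),
    hvalue.trans (mul_le_mul_of_nonneg_right ?_ (by positivity)),
    hcurv.trans (mul_le_mul_of_nonneg_right ?_ (by positivity))⟩ <;> linarith
end

section
/- Let h be an m×m Hermitian complex matrix and E ∈ ℝ such that E·I − h is positive definite. Then: (i) if φ ∈ ℂ^m satisfies hφ = eφ for a real number e, then for each τ ∈ {+1,−1} the vector (φ, τ√(2(E−e))·φ) ∈ ℂ^{2m} satisfies H(E)·(φ, τ√(2(E−e))·φ) = τ√(2(E−e))·(φ, τ√(2(E−e))·φ); (ii) the spectrum of H(E) equals {τ√(2(E−e)) : e an eigenvalue of h, τ ∈ {+1,−1}}. -/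
open scoped ComplexOrder

/-!
An eigenvector `(x, y)` of `[[0, 1], [A, 0]]` with eigenvalue `z` is characterised by `y = z • x`
and `A x = z² x`, so the spectrum of `H(E)` consists of the square roots of the eigenvalues of
`A = 2 (E - h)`, i.e. of the `z` with `E - z² / 2 ∈ spectrum h`. Positive definiteness of `E - h`
forces every eigenvalue `e` of `h` to be real with `e < E`, so these square roots are exactly
`±√(2 (E - e))`.
-/

theorem Complex.lt_ofReal_iff {z : ℂ} {x : ℝ} : z < x ↔ ∃ y : ℝ, y < x ∧ (y : ℂ) = z := by
  constructor
  · intro h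
    exact ⟨z.re, (Complex.lt_def.mp h).1, Complex.ext rfl (Complex.lt_def.mp h).2.symm⟩
  · rintro ⟨y, hy, rfl⟩
    exact Complex.real_lt_real.mpr hy

theorem Complex.sq_ofReal_sqrt {r : ℝ} (hr : 0 ≤ r) : ((√r : ℝ) : ℂ) ^ 2 = r := by
  rw [← Complex.ofReal_pow, Real.sq_sqrt hr]

namespace spectrum

variable {𝕜 A : Type*} [Field 𝕜] [Ring A] [Algebra 𝕜 A]

theorem sub_mem_smul_one_sub_iff {a : A} {r μ : 𝕜} :
    r - μ ∈ spectrum 𝕜 (r • 1 - a) ↔ μ ∈ spectrum 𝕜 a := by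
  rw [← Algebra.algebraMap_eq_smul_one, ← singleton_sub_eq, Set.singleton_sub,
    sub_right_injective.mem_set_image]

theorem mem_smul_smul_one_sub_iff {a : A} {k r w : 𝕜} (hk : k ≠ 0) :
    w ∈ spectrum 𝕜 (k • (r • 1 - a)) ↔ r - w / k ∈ spectrum 𝕜 a := by
  have hunit : k • (r • 1 - a) = Units.mk0 k hk • (r • 1 - a) := rfl
  rw [hunit, unit_smul_eq_smul, Set.mem_smul_set_iff_inv_smul_mem, ← sub_mem_smul_one_sub_iff,
    sub_sub_cancel, Units.smul_def, Units.val_inv_eq_inv_val, Units.val_mk0, smul_eq_mul,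
    div_eq_inv_mul]

end spectrum

namespace Matrix

variable {n : Type*} [Fintype n] [DecidableEq n]

theorem fromBlocks_zero_one_mulVec_eq_smul_iff {R : Type*} [Semiring R] (A : Matrix n n R)
    (x y : n → R) (z : R) :
    fromBlocks 0 1 A 0 *ᵥ Sum.elim x y = z • Sum.elim x y ↔ y = z • x ∧ A *ᵥ x = z ^ 2 • x := by
  have hsmul : z • Sum.elim x y = Sum.elim (z • x) (z • y) := by
    funext s; cases s <;> rfl
  rw [fromBlocks_mulVec, Sum.elim_comp_inl, Sum.elim_comp_inr, hsmul, Sum.elim_eq_iff]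
  simp only [zero_mulVec, one_mulVec, zero_add, add_zero]
  constructor <;> rintro ⟨rfl, hx⟩ <;> exact ⟨rfl, by rw [hx, smul_smul, sq]⟩

section Field

variable {K : Type*} [Field K]

theorem mem_spectrum_iff_exists_mulVec_eq_smul {A : Matrix n n K} {μ : K} :
    μ ∈ spectrum K A ↔ ∃ v, v ≠ 0 ∧ A *ᵥ v = μ • v := by
  rw [← spectrum_toLin', ← Module.End.hasEigenvalue_iff_mem_spectrum,
    Module.End.hasEigenvalue_iff, Submodule.ne_bot_iff]
  simp only [Module.End.mem_eigenspace_iff, toLin'_apply]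
  exact exists_congr fun v => and_comm

theorem mem_spectrum_fromBlocks_zero_one_iff (A : Matrix n n K) (z : K) :
    z ∈ spectrum K (fromBlocks 0 (1 : Matrix n n K) A 0) ↔ z ^ 2 ∈ spectrum K A := by
  simp only [mem_spectrum_iff_exists_mulVec_eq_smul]
  constructor
  · rintro ⟨v, hv0, hv⟩
    rw [← Sum.elim_comp_inl_inr v, fromBlocks_zero_one_mulVec_eq_smul_iff] at hv
    refine ⟨v ∘ Sum.inl, fun hx => hv0 ?_, hv.2⟩
    rw [← Sum.elim_comp_inl_inr v, hv.1, hx, smul_zero, Sum.elim_zero_zero]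
  · rintro ⟨x, hx0, hx⟩
    refine ⟨Sum.elim x (z • x), fun h => hx0 ?_,
      (fromBlocks_zero_one_mulVec_eq_smul_iff ..).2 ⟨rfl, hx⟩⟩
    simpa using congrArg (· ∘ Sum.inl) h

end Field

section RCLike

variable {𝕜 : Type*} [RCLike 𝕜]

theorem PosDef.pos_of_mem_spectrum {A : Matrix n n 𝕜} (hA : A.PosDef) {μ : 𝕜}
    (hμ : μ ∈ spectrum 𝕜 A) : 0 < μ :=
  lt_of_le_of_ne ((posSemidef_iff_isHermitian_and_spectrum_nonneg.mp hA.posSemidef).2 hμ)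
    fun h => (spectrum.zero_notMem_iff 𝕜).mpr hA.isUnit (h ▸ hμ)

theorem PosDef.lt_of_mem_spectrum {A : Matrix n n 𝕜} {c : 𝕜} (hA : (c • 1 - A).PosDef) {μ : 𝕜}
    (hμ : μ ∈ spectrum 𝕜 A) : μ < c :=
  sub_pos.mp (hA.pos_of_mem_spectrum (spectrum.sub_mem_smul_one_sub_iff.mpr hμ))

end RCLike

end Matrix

theorem stmt_15_general (m : ℕ) (h : Matrix (Fin m) (Fin m) ℂ)
    (E : ℝ) (hpos : ((E : ℂ) • (1 : Matrix (Fin m) (Fin m) ℂ) - h).PosDef) :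
    (∀ (φ : Fin m → ℂ) (e : ℝ) (τ : ℝ), τ = 1 ∨ τ = -1 →
      h.mulVec φ = (e : ℂ) • φ →
      (Matrix.fromBlocks (0 : Matrix (Fin m) (Fin m) ℂ) (1 : Matrix (Fin m) (Fin m) ℂ)
          ((2 : ℂ) • ((E : ℂ) • (1 : Matrix (Fin m) (Fin m) ℂ) - h))
          (0 : Matrix (Fin m) (Fin m) ℂ)).mulVec
        (Sum.elim φ fun i => ((τ * Real.sqrt (2 * (E - e)) : ℝ) : ℂ) * φ i)
        = ((τ * Real.sqrt (2 * (E - e)) : ℝ) : ℂ) •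
            Sum.elim φ (fun i => ((τ * Real.sqrt (2 * (E - e)) : ℝ) : ℂ) * φ i)) ∧
    spectrum ℂ
        (Matrix.fromBlocks (0 : Matrix (Fin m) (Fin m) ℂ) (1 : Matrix (Fin m) (Fin m) ℂ)
          ((2 : ℂ) • ((E : ℂ) • (1 : Matrix (Fin m) (Fin m) ℂ) - h))
          (0 : Matrix (Fin m) (Fin m) ℂ))
      = {z : ℂ | ∃ e : ℝ, (e : ℂ) ∈ spectrum ℂ h ∧
          (z = ((Real.sqrt (2 * (E - e)) : ℝ) : ℂ) ∨
            z = -((Real.sqrt (2 * (E - e)) : ℝ) : ℂ))} := by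
  have lt_of_mem {e : ℝ} (he : (e : ℂ) ∈ spectrum ℂ h) : e < E :=
    Complex.real_lt_real.mp (hpos.lt_of_mem_spectrum he)
  refine ⟨fun φ e τ hτ hφ =>
    (Matrix.fromBlocks_zero_one_mulVec_eq_smul_iff _ φ _ _).2 ⟨rfl, ?_⟩, ?_⟩
  · rcases eq_or_ne φ 0 with rfl | hφ0
    · simp
    have heE := lt_of_mem (Matrix.mem_spectrum_iff_exists_mulVec_eq_smul.mpr ⟨φ, hφ0, hφ⟩)
    have hτ2 : τ ^ 2 = 1 := by rcases hτ with rfl | rfl <;> norm_num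
    have ht2 : ((τ * √(2 * (E - e)) : ℝ) : ℂ) ^ 2 = 2 * (E - e) := by
      rw [Complex.ofReal_mul, mul_pow, ← Complex.ofReal_pow, hτ2,
        Complex.sq_ofReal_sqrt (by linarith)]
      push_cast
      ring
    rw [ht2, Matrix.smul_mulVec, Matrix.sub_mulVec, Matrix.smul_mulVec, Matrix.one_mulVec, hφ,
      ← sub_smul, smul_smul]
  · ext z
    rw [Set.mem_ofPred_eq, Matrix.mem_spectrum_fromBlocks_zero_one_iff,
      spectrum.mem_smul_smul_one_sub_iff two_ne_zero]
    simp only [← sq_eq_sq_iff_eq_or_eq_neg]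
    constructor
    · intro hz
      obtain ⟨e, heE, he⟩ := Complex.lt_ofReal_iff.mp (hpos.lt_of_mem_spectrum hz)
      refine ⟨e, he ▸ hz, ?_⟩
      rw [Complex.sq_ofReal_sqrt (by linarith)]
      push_cast
      rw [he]
      ring
    · rintro ⟨e, he, hz⟩
      rw [hz, Complex.sq_ofReal_sqrt (by linarith [lt_of_mem he])]
      convert he using 1
      push_cast
      ring

/-- Let `h` be an `m×m` Hermitian matrix and `E ∈ ℝ` with `E·I − h` positive definite,
and let `H(E) = [[0, I],[2(E·I − h), 0]]` (in `m×m` blocks).  Then: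
(i) if `hφ = eφ` with `e ∈ ℝ`, then for `τ = ±1` the vector `(φ, τ√(2(E−e))φ)` is an
eigenvector of `H(E)` with eigenvalue `τ√(2(E−e))`;
(ii) `spectrum ℂ H(E) = {τ√(2(E−e)) : e eigenvalue of h, τ = ±1}`. -/
theorem stmt_15 (m : ℕ) (h : Matrix (Fin m) (Fin m) ℂ) (hherm : h.IsHermitian)
    (E : ℝ) (hpos : ((E : ℂ) • (1 : Matrix (Fin m) (Fin m) ℂ) - h).PosDef) :
    (∀ (φ : Fin m → ℂ) (e : ℝ) (τ : ℝ), τ = 1 ∨ τ = -1 →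
      h.mulVec φ = (e : ℂ) • φ →
      (Matrix.fromBlocks (0 : Matrix (Fin m) (Fin m) ℂ) (1 : Matrix (Fin m) (Fin m) ℂ)
          ((2 : ℂ) • ((E : ℂ) • (1 : Matrix (Fin m) (Fin m) ℂ) - h))
          (0 : Matrix (Fin m) (Fin m) ℂ)).mulVec
        (Sum.elim φ fun i => ((τ * Real.sqrt (2 * (E - e)) : ℝ) : ℂ) * φ i)
        = ((τ * Real.sqrt (2 * (E - e)) : ℝ) : ℂ) •
            Sum.elim φ (fun i => ((τ * Real.sqrt (2 * (E - e)) : ℝ) : ℂ) * φ i)) ∧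
    spectrum ℂ
        (Matrix.fromBlocks (0 : Matrix (Fin m) (Fin m) ℂ) (1 : Matrix (Fin m) (Fin m) ℂ)
          ((2 : ℂ) • ((E : ℂ) • (1 : Matrix (Fin m) (Fin m) ℂ) - h))
          (0 : Matrix (Fin m) (Fin m) ℂ))
      = {z : ℂ | ∃ e : ℝ, (e : ℂ) ∈ spectrum ℂ h ∧
          (z = ((Real.sqrt (2 * (E - e)) : ℝ) : ℂ) ∨
            z = -((Real.sqrt (2 * (E - e)) : ℝ) : ℂ))} :=
  stmt_15_general m h E hpos
end

section
/- Let h be an m×m Hermitian complex matrix with orthonormal eigenbasis φ₁,…,φ_m and real eigenvalues e₁,…,e_m (hφ_j = e_jφ_j), and let E ∈ ℝ with E > e_j for all j; set k_j := √(2(E − e_j)). For j = 1,…,m and τ ∈ {+1,−1} define χ_j^τ := (φ_j, τ k_j φ_j) ∈ ℂ^{2m}, θ_j^τ := (1/2)(φ_j, (τ/k_j) φ_j) ∈ ℂ^{2m}, and the 2m×2m matrix P_j^τ := |χ_j^τ⟩⟨θ_j^τ| (i.e. P_j^τ v = ⟨θ_j^τ, v⟩ χ_j^τ, with the inner product conjugate-linear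 in its first argument). Then: (i) P_j^τ P_l^σ = δ_{jl} δ_{τσ} P_j^τ; (ii) Σ_{j,τ} P_j^τ = I_{2m}; and (iii) H(E) = Σ_{j,τ} τ k_j P_j^τ. -/
/-!
With `Q_j = |φ_j⟩⟨φ_j|`, each `P_j^τ` is the block matrix
`½ [[Q_j, (τ/k_j) Q_j], [τ k_j Q_j, Q_j]]`. Orthonormality gives
`⟨θ_j^τ, χ_l^σ⟩ = δ_{jl} (1 + τσ)/2`, which is (i), and, since a one-sided inverse of a square
matrix is two-sided, the completeness relation `∑_j Q_j = I`; together with the eigen-equations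
it also gives `h = ∑_j e_j Q_j`. Summing over `τ = ±1` cancels the off-diagonal blocks of
`P_j^τ`, leaving `diag(Q_j, Q_j)`, which sums to `I` (ii); weighting by `τ k_j` cancels the
diagonal ones instead, leaving `[[0, Q_j], [k_j² Q_j, 0]]` with `k_j² = 2(E − e_j)`, which sums
to `H(E)` (iii).
-/

namespace Matrix

variable {ι l m n o α : Type*}

theorem vecMulVec_sumElim [Mul α] (u : l → α) (v : m → α) (w : n → α) (x : o → α) :
    vecMulVec (Sum.elim u v) (Sum.elim w x) =
      fromBlocks (vecMulVec u w) (vecMulVec u x) (vecMulVec v w) (vecMulVec v x) := by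
  ext (i | i) (j | j) <;> rfl

theorem sum_fromBlocks [Fintype ι] [AddCommMonoid α] (A : ι → Matrix n l α)
    (B : ι → Matrix n m α) (C : ι → Matrix o l α) (D : ι → Matrix o m α) :
    ∑ i, fromBlocks (A i) (B i) (C i) (D i) =
      fromBlocks (∑ i, A i) (∑ i, B i) (∑ i, C i) (∑ i, D i) := by
  ext (i | i) (j | j) <;> simp [sum_apply]

theorem sum_vecMulVec_eq_one [Fintype n] [DecidableEq n] [CommRing α] {φ ψ : n → n → α}
    (h : ∀ i j, ψ i ⬝ᵥ φ j = if i = j then 1 else 0) :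
    ∑ i, vecMulVec (φ i) (ψ i) = 1 := by
  have hψφ : of ψ * (of φ)ᵀ = 1 := by
    ext i j
    simpa [mul_apply, one_apply, dotProduct] using h i j
  calc ∑ i, vecMulVec (φ i) (ψ i) = (of φ)ᵀ * of ψ := by
        ext a b
        simp [sum_apply, mul_apply, vecMulVec_apply]
    _ = 1 := mul_eq_one_comm.mp hψφ

theorem eq_sum_smul_vecMulVec [Fintype ι] [Fintype n] [DecidableEq n] [Semiring α]
    {M : Matrix n n α} {φ ψ : ι → n → α} {μ : ι → α}
    (hφψ : ∑ i, vecMulVec (φ i) (ψ i) = 1) (hM : ∀ i, M *ᵥ φ i = μ i • φ i) :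
    M = ∑ i, μ i • vecMulVec (φ i) (ψ i) := by
  calc M = M * ∑ i, vecMulVec (φ i) (ψ i) := by rw [hφψ, mul_one]
    _ = ∑ i, μ i • vecMulVec (φ i) (ψ i) := by
        simp only [Finset.mul_sum, mul_vecMulVec, hM, smul_vecMulVec]

end Matrix

open Matrix

def doubledVec {n K : Type*} [Mul K] (u : n → K) (c : K) : n ⊕ n → K := Sum.elim u (c • u)

section DoubledVec

variable {n K : Type*}

theorem vecMulVec_doubledVec [CommSemiring K] (u w : n → K) (a b : K) :
    vecMulVec (doubledVec u a) (doubledVec w b) =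
      fromBlocks (vecMulVec u w) (b • vecMulVec u w) (a • vecMulVec u w)
        ((a * b) • vecMulVec u w) := by
  rw [doubledVec, doubledVec, vecMulVec_sumElim, smul_vecMulVec, vecMulVec_smul,
    smul_vecMulVec, vecMulVec_smul, smul_smul]

theorem doubledVec_dotProduct_doubledVec [Fintype n] [CommSemiring K] (w u : n → K) (b a : K) :
    doubledVec w b ⬝ᵥ doubledVec u a = (1 + b * a) * (w ⬝ᵥ u) := by
  rw [doubledVec, doubledVec, sumElim_dotProduct_sumElim, smul_dotProduct, dotProduct_smul,
    smul_smul, smul_eq_mul]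
  ring

variable [Field K]

/-- `doubledProj (φ j) (star (φ j)) (k j) τ` is the paper's `P_j^τ = |χ_j^τ⟩⟨θ_j^τ|`. -/
def doubledProj (u w : n → K) (κ τ : K) : Matrix (n ⊕ n) (n ⊕ n) K :=
  vecMulVec (doubledVec u (τ * κ)) ((1 / 2 : K) • doubledVec w (τ / κ))

variable [NeZero (2 : K)] (u w : n → K) {κ : K}

theorem doubledProj_one_add_neg_one (hκ : κ ≠ 0) :
    doubledProj u w κ 1 + doubledProj u w κ (-1) =
      fromBlocks (vecMulVec u w) 0 0 (vecMulVec u w) := by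
  simp only [doubledProj, vecMulVec_smul, vecMulVec_doubledVec, fromBlocks_smul, fromBlocks_add]
  congr 1 <;> match_scalars <;> field_simp <;> ring

theorem smul_doubledProj_one_add_neg_one (hκ : κ ≠ 0) :
    κ • doubledProj u w κ 1 + (-κ) • doubledProj u w κ (-1) =
      fromBlocks 0 (vecMulVec u w) (κ ^ 2 • vecMulVec u w) 0 := by
  simp only [doubledProj, vecMulVec_smul, vecMulVec_doubledVec, fromBlocks_smul, fromBlocks_add]
  congr 1 <;> match_scalars <;> field_simp <;> ring

end DoubledVec

theorem stmt_16_general (m : ℕ) (h : Matrix (Fin m) (Fin m) ℂ)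
    (φ : Fin m → Fin m → ℂ) (e : Fin m → ℝ)
    (horth : ∀ i j : Fin m,
      dotProduct (star (φ i)) (φ j) = if i = j then 1 else 0)
    (heig : ∀ j : Fin m, h.mulVec (φ j) = ((e j : ℝ) : ℂ) • φ j)
    (E : ℝ) (hE : ∀ j : Fin m, e j < E)
    (k : Fin m → ℝ) (hk : ∀ j : Fin m, k j = Real.sqrt (2 * (E - e j)))
    (χ θ : Fin m → ℝ → (Fin m ⊕ Fin m → ℂ))
    (hχ : ∀ (j : Fin m) (τ : ℝ),
      χ j τ = Sum.elim (φ j) fun i => ((τ * k j : ℝ) : ℂ) * φ j i)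
    (hθ : ∀ (j : Fin m) (τ : ℝ),
      θ j τ = Sum.elim (fun i => (1 / 2 : ℂ) * φ j i)
        fun i => (1 / 2 : ℂ) * ((τ / k j : ℝ) : ℂ) * φ j i)
    (P : Fin m → ℝ → Matrix (Fin m ⊕ Fin m) (Fin m ⊕ Fin m) ℂ)
    (hP : ∀ (j : Fin m) (τ : ℝ), P j τ = Matrix.vecMulVec (χ j τ) (star (θ j τ)))
    (H : Matrix (Fin m ⊕ Fin m) (Fin m ⊕ Fin m) ℂ)
    (hH : H = Matrix.fromBlocks (0 : Matrix (Fin m) (Fin m) ℂ)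
      (1 : Matrix (Fin m) (Fin m) ℂ)
      ((2 : ℂ) • ((E : ℂ) • (1 : Matrix (Fin m) (Fin m) ℂ) - h))
      (0 : Matrix (Fin m) (Fin m) ℂ)) :
    (∀ (j l : Fin m) (τ σ : ℝ), (τ = 1 ∨ τ = -1) → (σ = 1 ∨ σ = -1) →
      P j τ * P l σ = if j = l ∧ τ = σ then P j τ else 0) ∧
    (∑ j : Fin m, (P j 1 + P j (-1))) = 1 ∧
    H = ∑ j : Fin m, (((k j : ℝ) : ℂ) • P j 1 + (-(k j : ℝ) : ℂ) • P j (-1)) := by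
  have hk_ne : ∀ j, (k j : ℂ) ≠ 0 := fun j => by
    rw [hk, Complex.ofReal_ne_zero, Real.sqrt_ne_zero']
    linarith [hE j]
  have hk_sq : ∀ j, (k j : ℂ) ^ 2 = 2 * (E - e j) := fun j => by
    rw [hk]
    exact_mod_cast Real.sq_sqrt (by linarith [hE j])
  have hP_eq : ∀ j τ, P j τ = doubledProj (φ j) (star (φ j)) (k j) τ := fun j τ => by
    rw [hP, hχ, hθ, doubledProj, doubledVec, doubledVec]
    congr 1 <;> ext (i | i) <;>
      simp only [Sum.elim_inl, Sum.elim_inr, Pi.smul_apply, Pi.star_apply, smul_eq_mul,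
        Complex.ofReal_mul, Complex.ofReal_div, star_mul', star_div₀, RCLike.star_def,
        Complex.conj_ofReal, map_one, map_ofNat]
    ring
  have hQ_sum : ∑ j, vecMulVec (φ j) (star (φ j)) = 1 := sum_vecMulVec_eq_one horth
  refine ⟨fun j l τ σ hτ hσ => ?_, ?_, ?_⟩
  · have hdot :
        ((1 / 2 : ℂ) • doubledVec (star (φ j)) (τ / k j)) ⬝ᵥ doubledVec (φ l) (σ * k l) =
          if j = l ∧ τ = σ then 1 else 0 := by
      rw [smul_dotProduct, doubledVec_dotProduct_doubledVec, horth]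
      by_cases hjl : j = l
      · subst hjl
        field_simp [hk_ne j]
        rcases hτ with rfl | rfl <;> rcases hσ with rfl | rfl <;> norm_num
      · simp [hjl]
    rw [hP_eq, hP_eq, doubledProj, doubledProj, vecMulVec_mul_vecMulVec, hdot]
    split_ifs with hc
    · rw [one_smul, hc.1, hc.2]
    · rw [zero_smul, vecMulVec_zero]
  · simp only [hP_eq, Complex.ofReal_one, Complex.ofReal_neg,
      doubledProj_one_add_neg_one _ _ (hk_ne _), sum_fromBlocks, hQ_sum,
      Finset.sum_const_zero, fromBlocks_one]
  · simp only [hP_eq, Complex.ofReal_one, Complex.ofReal_neg,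
      smul_doubledProj_one_add_neg_one _ _ (hk_ne _), hk_sq, sum_fromBlocks, hQ_sum,
      Finset.sum_const_zero, hH]
    congr 1
    rw [eq_sum_smul_vecMulVec hQ_sum heig, ← hQ_sum, Finset.smul_sum, ← Finset.sum_sub_distrib,
      Finset.smul_sum]
    congr 1 with j : 1
    module

/-- Let `h` be an `m×m` Hermitian matrix with orthonormal eigenbasis `φ₁,…,φ_m` and real
eigenvalues `e₁,…,e_m`, and `E > e_j` for all `j`; `k_j := √(2(E−e_j))`.  With
`χ_j^τ := (φ_j, τk_jφ_j)`, `θ_j^τ := (1/2)(φ_j, (τ/k_j)φ_j)`, and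
`P_j^τ := |χ_j^τ⟩⟨θ_j^τ|`, and `H(E) = [[0, I],[2(E·I − h), 0]]`:
(i) `P_j^τ P_l^σ = δ_{jl} δ_{τσ} P_j^τ`; (ii) `Σ_{j,τ} P_j^τ = I`;
(iii) `H(E) = Σ_{j,τ} τ k_j P_j^τ`. -/
theorem stmt_16 (m : ℕ) (h : Matrix (Fin m) (Fin m) ℂ) (hherm : h.IsHermitian)
    (φ : Fin m → Fin m → ℂ) (e : Fin m → ℝ)
    (horth : ∀ i j : Fin m,
      dotProduct (star (φ i)) (φ j) = if i = j then 1 else 0)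
    (heig : ∀ j : Fin m, h.mulVec (φ j) = ((e j : ℝ) : ℂ) • φ j)
    (E : ℝ) (hE : ∀ j : Fin m, e j < E)
    (k : Fin m → ℝ) (hk : ∀ j : Fin m, k j = Real.sqrt (2 * (E - e j)))
    (χ θ : Fin m → ℝ → (Fin m ⊕ Fin m → ℂ))
    (hχ : ∀ (j : Fin m) (τ : ℝ),
      χ j τ = Sum.elim (φ j) fun i => ((τ * k j : ℝ) : ℂ) * φ j i)
    (hθ : ∀ (j : Fin m) (τ : ℝ),
      θ j τ = Sum.elim (fun i => (1 / 2 : ℂ) * φ j i)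
        fun i => (1 / 2 : ℂ) * ((τ / k j : ℝ) : ℂ) * φ j i)
    (P : Fin m → ℝ → Matrix (Fin m ⊕ Fin m) (Fin m ⊕ Fin m) ℂ)
    (hP : ∀ (j : Fin m) (τ : ℝ), P j τ = Matrix.vecMulVec (χ j τ) (star (θ j τ)))
    (H : Matrix (Fin m ⊕ Fin m) (Fin m ⊕ Fin m) ℂ)
    (hH : H = Matrix.fromBlocks (0 : Matrix (Fin m) (Fin m) ℂ)
      (1 : Matrix (Fin m) (Fin m) ℂ)
      ((2 : ℂ) • ((E : ℂ) • (1 : Matrix (Fin m) (Fin m) ℂ) - h))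
      (0 : Matrix (Fin m) (Fin m) ℂ)) :
    (∀ (j l : Fin m) (τ σ : ℝ), (τ = 1 ∨ τ = -1) → (σ = 1 ∨ σ = -1) →
      P j τ * P l σ = if j = l ∧ τ = σ then P j τ else 0) ∧
    (∑ j : Fin m, (P j 1 + P j (-1))) = 1 ∧
    H = ∑ j : Fin m, (((k j : ℝ) : ℂ) • P j 1 + (-(k j : ℝ) : ℂ) • P j (-1)) :=
  stmt_16_general m h φ e horth heig E hE k hk χ θ hχ hθ P hP H hH
end
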